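/- arXiv:1610.01437 — 10 statements merged into one kernel-verified Lean document; each statement's English description precedes it below -/
import Mathlib

section
/- If a polynomial p of degree at most n satisfies p(x) = Σ_{i=0}^q A_i x^i (1-x)^{q-i} with all A_i ≥ 0, and p(0) > 0 and p(1) > 0, then for every q* ≥ 2q there exist strictly positive coefficients B_k > 0 such that p(x) = Σ_{k=0}^{q*} B_k x^k (1-x)^{q*-k}. -/
open Finset

theorem stmt_2 (n q : ℕ) (p : ℝ → ℝ) (A : ℕ → ℝ)
    (hA : ∀ i ≤ q, 0 ≤ A i)
    (hp : ∀ x, p x = ∑ i ∈ range (q + 1), A i * x ^ i * (1 - x) ^ (q - i))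
    (h0 : 0 < p 0) (h1 : 0 < p 1)
    (qs : ℕ) (hqs : 2 * q ≤ qs) :
    ∃ B : ℕ → ℝ, (∀ k ≤ qs, 0 < B k) ∧
      ∀ x, p x = ∑ k ∈ range (qs + 1), B k * x ^ k * (1 - x) ^ (qs - k) := by
  set m := qs - q with hm
  have hqm : q + m = qs := by omega
  have hA0 : p 0 = A 0 := by
    rw [hp]
    rw [Finset.sum_eq_single_of_mem 0 (by simp)]
    · simp
    · intro i _ hi
      simp [zero_pow hi]
  have hAq : p 1 = A q := by
    rw [hp]
    rw [Finset.sum_eq_single_of_mem q (by simp)]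
    · simp
    · intro i hi hiq
      have : q - i ≠ 0 := by simp at hi; omega
      simp [this]
  have hsum1 : ∀ x : ℝ, ∑ j ∈ range (m + 1), (m.choose j : ℝ) * x ^ j * (1 - x) ^ (m - j) = 1 := by
    intro x
    have h := add_pow x (1 - x) m
    have hx : x + (1 - x) = 1 := by ring
    rw [hx, one_pow] at h
    conv_rhs => rw [h]
    exact Finset.sum_congr rfl (fun j _ => by ring)
  refine ⟨fun k => ∑ i ∈ range (q + 1), (if i ≤ k then (m.choose (k - i) : ℝ) else 0) * A i,
    ?_, ?_⟩
  · intro k hk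
    apply Finset.sum_pos'
    · intro i hi
      simp only [mem_range] at hi
      have : 0 ≤ A i := hA i (by omega)
      split
      · positivity
      · simp
    · by_cases hkm : k ≤ m
      · refine ⟨0, by simp, ?_⟩
        simp only [Nat.zero_le, if_pos, Nat.sub_zero]
        have : (0:ℝ) < m.choose k := by exact_mod_cast Nat.choose_pos hkm
        have hA0' : 0 < A 0 := hA0 ▸ h0
        positivity
      · refine ⟨q, by simp, ?_⟩
        have hqk : q ≤ k := by omega
        rw [if_pos hqk]
        have : (0:ℝ) < m.choose (k - q) := by
          exact_mod_cast Nat.choose_pos (by omega)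
        have hAq' : 0 < A q := hAq ▸ h1
        positivity
  · intro x
    rw [hp x]
    symm
    calc ∑ k ∈ range (qs + 1),
          (∑ i ∈ range (q + 1), (if i ≤ k then (m.choose (k - i) : ℝ) else 0) * A i)
            * x ^ k * (1 - x) ^ (qs - k)
        = ∑ k ∈ range (qs + 1), ∑ i ∈ range (q + 1),
            (if i ≤ k then (m.choose (k - i) : ℝ) else 0) * A i * x ^ k * (1 - x) ^ (qs - k) := by
          refine Finset.sum_congr rfl (fun k _ => ?_)
          rw [Finset.sum_mul, Finset.sum_mul]
      _ = ∑ i ∈ range (q + 1), ∑ k ∈ range (qs + 1),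
            (if i ≤ k then (m.choose (k - i) : ℝ) else 0) * A i * x ^ k * (1 - x) ^ (qs - k) :=
          Finset.sum_comm
      _ = ∑ i ∈ range (q + 1), A i * x ^ i * (1 - x) ^ (q - i) := by
          refine Finset.sum_congr rfl (fun i hi => ?_)
          simp only [mem_range] at hi
          have hiq : i ≤ q := by omega
          have hstep1 : ∑ k ∈ range (qs + 1),
              (if i ≤ k then (m.choose (k - i) : ℝ) else 0) * A i * x ^ k * (1 - x) ^ (qs - k)
              = ∑ k ∈ Ico i (i + m + 1),
              (if i ≤ k then (m.choose (k - i) : ℝ) else 0) * A i * x ^ k * (1 - x) ^ (qs - k) := by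
            symm
            apply Finset.sum_subset
            · intro k hk
              simp only [mem_Ico] at hk
              simp only [mem_range]
              omega
            · intro k hk hk'
              simp only [mem_range] at hk
              simp only [mem_Ico, not_and, not_lt] at hk'
              by_cases hik : i ≤ k
              · have : m < k - i := by
                  have := hk' hik; omega
                rw [if_pos hik, Nat.choose_eq_zero_of_lt this]
                simp
              · rw [if_neg hik]; simp
          rw [hstep1, Finset.sum_Ico_eq_sum_range]
          have hrange : i + m + 1 - i = m + 1 := by omega
          rw [hrange]
          have hterm : ∀ j ∈ range (m + 1),
              (if i ≤ i + j then (m.choose (i + j - i) : ℝ) else 0) * A i * x ^ (i + j)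
                * (1 - x) ^ (qs - (i + j))
              = (A i * x ^ i * (1 - x) ^ (q - i)) *
                ((m.choose j : ℝ) * x ^ j * (1 - x) ^ (m - j)) := by
            intro j hj
            simp only [mem_range] at hj
            rw [if_pos (Nat.le_add_right i j), Nat.add_sub_cancel_left]
            have hsub : qs - (i + j) = (q - i) + (m - j) := by omega
            rw [hsub, pow_add, pow_add]
            ring
          rw [Finset.sum_congr rfl hterm, ← Finset.mul_sum, hsum1, mul_one]
end

section
/- If p: ℝ → ℝ is a polynomial of degree at most n that is strictly positive on [0,1], then there exists q ≥ n and strictly positive reals C_0,...,C_q such that p(x) = Σ_{i=0}^q C_i x^i (1-x)^{q-i} for all x. -/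
open Finset

lemma aux_prod_diff (s : Finset ℕ) (f g : ℕ → ℝ)
    (hf : ∀ j ∈ s, 0 ≤ f j ∧ f j ≤ 1) (hg : ∀ j ∈ s, 0 ≤ g j ∧ g j ≤ 1) :
    |(∏ j ∈ s, f j) - ∏ j ∈ s, g j| ≤ ∑ j ∈ s, |f j - g j| := by
  induction s using Finset.cons_induction with
  | empty => simp
  | cons a s ha ih =>
    rw [prod_cons, prod_cons, sum_cons]
    have hga := hg a (mem_cons_self a s)
    have hfs : ∀ j ∈ s, 0 ≤ f j ∧ f j ≤ 1 := fun j hj => hf j (mem_cons_of_mem hj)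
    have hgs : ∀ j ∈ s, 0 ≤ g j ∧ g j ≤ 1 := fun j hj => hg j (mem_cons_of_mem hj)
    have hPf : 0 ≤ ∏ j ∈ s, f j := prod_nonneg fun j hj => (hfs j hj).1
    have hPf1 : (∏ j ∈ s, f j) ≤ 1 :=
      prod_le_one (fun j hj => (hfs j hj).1) (fun j hj => (hfs j hj).2)
    have hfa := hf a (mem_cons_self a s)
    calc |f a * ∏ j ∈ s, f j - g a * ∏ j ∈ s, g j|
        = |(f a - g a) * ∏ j ∈ s, f j + g a * ((∏ j ∈ s, f j) - ∏ j ∈ s, g j)| := by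
          congr 1; ring
      _ ≤ |(f a - g a) * ∏ j ∈ s, f j| + |g a * ((∏ j ∈ s, f j) - ∏ j ∈ s, g j)| :=
          abs_add_le _ _
      _ ≤ |f a - g a| * 1 + 1 * |(∏ j ∈ s, f j) - ∏ j ∈ s, g j| := by
          rw [abs_mul, abs_mul]
          gcongr
          · rw [abs_of_nonneg hPf]; exact hPf1
          · rw [abs_of_nonneg hga.1]; exact hga.2
      _ ≤ |f a - g a| + ∑ j ∈ s, |f j - g j| := by
          rw [mul_one, one_mul]
          gcongr
          exact ih hfs hgs

lemma aux_choose_nat (q k : ℕ) (hk : k ≤ q) :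
    ∀ i, i ≤ k → (q-i).choose (k-i) * ∏ j ∈ range i, (q-j)
      = q.choose k * ∏ j ∈ range i, (k-j) := by
  intro i
  induction i with
  | zero => intro _; simp
  | succ i ih =>
    intro h
    have hik : i ≤ k := by omega
    rw [prod_range_succ, prod_range_succ]
    have key : (q - (i+1)).choose (k - (i+1)) * (q - i) = (q-i).choose (k-i) * (k-i) := by
      have h1 : q - i = Nat.succ (q - (i+1)) := by omega
      have h2 : k - i = Nat.succ (k - (i+1)) := by omega
      rw [h1, h2, mul_comm, Nat.add_one_mul_choose_eq]
    calc (q - (i+1)).choose (k - (i+1)) * ((∏ j ∈ range i, (q-j)) * (q-i))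
        = ((q - (i+1)).choose (k - (i+1)) * (q-i)) * ∏ j ∈ range i, (q-j) := by ring
      _ = ((q-i).choose (k-i) * (k-i)) * ∏ j ∈ range i, (q-j) := by rw [key]
      _ = ((q-i).choose (k-i) * ∏ j ∈ range i, (q-j)) * (k-i) := by ring
      _ = (q.choose k * ∏ j ∈ range i, (k-j)) * (k-i) := by rw [ih hik]
      _ = q.choose k * ((∏ j ∈ range i, (k-j)) * (k-i)) := by ring

lemma aux_choose_real (q k i : ℕ) (hik : i ≤ k) (hk : k ≤ q) :
    ((q-i).choose (k-i) : ℝ) = q.choose k * ∏ j ∈ range i, (((k:ℝ)-j)/((q:ℝ)-j)) := by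
  have hnat := aux_choose_nat q k hk i hik
  have e1 : ((∏ j ∈ range i, (q-j) : ℕ) : ℝ) = ∏ j ∈ range i, ((q:ℝ)-j) := by
    rw [Nat.cast_prod]
    exact Finset.prod_congr rfl fun j hj => by
      have : j ≤ q := by have := mem_range.mp hj; omega
      push_cast [this]; ring
  have e2 : ((∏ j ∈ range i, (k-j) : ℕ) : ℝ) = ∏ j ∈ range i, ((k:ℝ)-j) := by
    rw [Nat.cast_prod]
    exact Finset.prod_congr rfl fun j hj => by
      have : j ≤ k := by have := mem_range.mp hj; omega
      push_cast [this]; ring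
  have hcast : ((q-i).choose (k-i) : ℝ) * ∏ j ∈ range i, ((q:ℝ)-j)
      = q.choose k * ∏ j ∈ range i, ((k:ℝ)-j) := by
    rw [← e1, ← e2]
    exact_mod_cast congrArg (fun m : ℕ => (m : ℝ)) hnat
  have hprodpos : 0 < ∏ j ∈ range i, ((q:ℝ)-j) := by
    apply prod_pos
    intro j hj
    have hj' : j < i := mem_range.mp hj
    have : (j:ℝ) < q := by
      have : j < q := by omega
      exact_mod_cast this
    linarith
  rw [Finset.prod_div_distrib, mul_div_assoc', eq_div_iff hprodpos.ne']
  exact hcast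

lemma aux_pow (q i : ℕ) (hi : i ≤ q) (x : ℝ) :
    x ^ i = ∑ k ∈ range (q+1),
      (if i ≤ k then ((q-i).choose (k-i) : ℝ) else 0) * x ^ k * (1-x) ^ (q-k) := by
  rw [range_eq_Ico, ← Finset.sum_Ico_consecutive _ (Nat.zero_le i) (by omega : i ≤ q+1)]
  have h2 : ∑ k ∈ Finset.Ico 0 i,
      (if i ≤ k then ((q-i).choose (k-i) : ℝ) else 0) * x ^ k * (1-x) ^ (q-k) = 0 := by
    apply Finset.sum_eq_zero
    intro k hk
    rw [Finset.mem_Ico] at hk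
    rw [if_neg (by omega)]
    ring
  rw [h2, zero_add, Finset.sum_Ico_eq_sum_range]
  have h3 : ∀ j ∈ range (q + 1 - i),
      (if i ≤ i + j then ((q-i).choose (i+j-i) : ℝ) else 0) * x ^ (i+j) * (1-x) ^ (q-(i+j))
      = x ^ i * (x ^ j * (1-x) ^ ((q - i) - j) * ((q-i).choose j : ℝ)) := by
    intro j hj
    rw [if_pos (Nat.le_add_right i j)]
    have e1 : i + j - i = j := by omega
    have e2 : q - (i + j) = (q - i) - j := by omega
    rw [e1, e2, pow_add]
    ring
  rw [Finset.sum_congr rfl h3, ← Finset.mul_sum]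
  have h4 : q + 1 - i = (q - i) + 1 := by omega
  rw [h4, ← add_pow]
  rw [show x + (1-x) = (1:ℝ) by ring, one_pow, mul_one]

set_option maxHeartbeats 1000000 in
theorem stmt_6 (n : ℕ) (a : ℕ → ℝ)
    (hpos : ∀ x ∈ Set.Icc (0 : ℝ) 1, 0 < ∑ i ∈ range (n + 1), a i * x ^ i) :
    ∃ q, n ≤ q ∧ ∃ C : ℕ → ℝ, (∀ i ≤ q, 0 < C i) ∧
      ∀ x : ℝ, ∑ i ∈ range (n + 1), a i * x ^ i =
        ∑ i ∈ range (q + 1), C i * x ^ i * (1 - x) ^ (q - i) := by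
  set p : ℝ → ℝ := fun x => ∑ i ∈ range (n+1), a i * x ^ i with hp
  have hcont : Continuous p :=
    continuous_finset_sum _ fun i _ => (continuous_const.mul (continuous_pow i))
  obtain ⟨x₀, hx₀, hmin⟩ := isCompact_Icc.exists_isMinOn
    (Set.nonempty_Icc.mpr zero_le_one) hcont.continuousOn
  set m := p x₀ with hm
  have hm0 : 0 < m := hpos x₀ hx₀
  have hmle : ∀ x ∈ Set.Icc (0:ℝ) 1, m ≤ p x := fun x hx => hmin hx
  set A : ℝ := ∑ i ∈ range (n+1), |a i| with hA
  have hA0 : 0 ≤ A := sum_nonneg fun i _ => abs_nonneg _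
  set N : ℕ := Nat.floor (A * ((n:ℝ)^2 + n) / m) + 1 with hN
  set q : ℕ := n + N with hq
  have hnq : n ≤ q := by omega
  have hNpos : (0:ℝ) < N := by
    have : 0 < N := by omega
    exact_mod_cast this
  have hqn : (q:ℝ) - n = N := by push_cast [hq]; ring
  have hqnpos : (0:ℝ) < (q:ℝ) - n := by rw [hqn]; exact hNpos
  have hq0 : (0:ℝ) < q := by
    have : (n:ℝ) ≥ 0 := Nat.cast_nonneg n
    linarith
  set ε : ℝ := ((n:ℝ)^2 + n) / ((q:ℝ) - n) with hε
  have hkey : A * ε < m := by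
    rw [hε, hqn, mul_div_assoc']
    rw [div_lt_iff₀ hNpos]
    have h1 : A * ((n:ℝ)^2 + n) / m < N := by
      rw [hN]
      push_cast
      exact Nat.lt_floor_add_one _
    calc A * ((n:ℝ)^2 + n) = (A * ((n:ℝ)^2 + n) / m) * m := by field_simp
      _ < (N:ℝ) * m := by
          apply mul_lt_mul_of_pos_right h1 hm0
      _ = m * N := by ring
  clear_value q
  clear_value N
  set C : ℕ → ℝ := fun k => ∑ i ∈ range (n+1),
    a i * (if i ≤ k then ((q-i).choose (k-i) : ℝ) else 0) with hC
  refine ⟨q, hnq, C, ?_, ?_⟩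
  · -- positivity
    intro k hkq
    set t : ℝ := (k:ℝ)/q with ht
    have ht0 : 0 ≤ t := div_nonneg (Nat.cast_nonneg k) (Nat.cast_nonneg q)
    have ht1 : t ≤ 1 := div_le_one_of_le₀ (by exact_mod_cast hkq) (Nat.cast_nonneg q)
    set b : ℕ → ℝ := fun i =>
      if i ≤ k then ∏ j ∈ range i, (((k:ℝ)-j)/((q:ℝ)-j)) else 0 with hb
    have hε0 : 0 ≤ ε := by
      apply div_nonneg _ (le_of_lt hqnpos)
      positivity
    have hnqn : (n:ℝ)/((q:ℝ)-n) ≤ ε := by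
      rw [hε]
      exact div_le_div₀ (by positivity) (by nlinarith [sq_nonneg (n:ℝ)]) hqnpos le_rfl
    have hbd : ∀ i ∈ range (n+1), |b i - t^i| ≤ ε := by
      intro i hi
      have hin : i ≤ n := by have := mem_range.mp hi; omega
      by_cases hik : i ≤ k
      · simp only [hb, if_pos hik]
        have htpow : t ^ i = ∏ _j ∈ range i, t := by
          rw [prod_const, card_range]
        rw [htpow]
        have hfmem : ∀ j ∈ range i, 0 ≤ ((k:ℝ)-j)/((q:ℝ)-j) ∧ ((k:ℝ)-j)/((q:ℝ)-j) ≤ 1 := by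
          intro j hj
          have hji : j < i := mem_range.mp hj
          have hjk : (j:ℝ) ≤ k := by
            have : j ≤ k := by omega
            exact_mod_cast this
          have hjq : (j:ℝ) < q := by
            have : j < q := by omega
            exact_mod_cast this
          have hkq' : (k:ℝ) ≤ q := by exact_mod_cast hkq
          constructor
          · apply div_nonneg <;> linarith
          · rw [div_le_one (by linarith)]; linarith
        have hgmem : ∀ j ∈ range i, 0 ≤ t ∧ t ≤ 1 := fun j _ => ⟨ht0, ht1⟩
        calc |(∏ j ∈ range i, ((k:ℝ)-j)/((q:ℝ)-j)) - ∏ _j ∈ range i, t|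
            ≤ ∑ j ∈ range i, |((k:ℝ)-j)/((q:ℝ)-j) - t| :=
              aux_prod_diff _ _ _ hfmem hgmem
          _ ≤ ∑ j ∈ range i, (n:ℝ)/((q:ℝ)-n) := by
              apply sum_le_sum
              intro j hj
              have hji : j < i := mem_range.mp hj
              have hjk : (j:ℝ) ≤ k := by
                have : j ≤ k := by omega
                exact_mod_cast this
              have hjq : (j:ℝ) < q := by
                have : j < q := by omega
                exact_mod_cast this
              have hjn : (j:ℝ) ≤ n := by
                have : j ≤ n := by omega
                exact_mod_cast this
              have hkq' : (k:ℝ) ≤ q := by exact_mod_cast hkq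
              have hval : ((k:ℝ)-j)/((q:ℝ)-j) - t
                  = -((j:ℝ) * ((q:ℝ)-k)) / (((q:ℝ)-j) * q) := by
                rw [ht, div_sub_div _ _ (by linarith : ((q:ℝ)-j) ≠ 0) hq0.ne']
                congr 1
                ring
              have hnum : (0:ℝ) ≤ (j:ℝ)*((q:ℝ)-k) :=
                mul_nonneg (Nat.cast_nonneg j) (by linarith)
              have hden : (0:ℝ) < ((q:ℝ)-j)*q := mul_pos (by linarith) hq0
              rw [hval, abs_div, abs_neg, abs_of_nonneg hnum, abs_of_nonneg hden.le]
              calc (j:ℝ) * ((q:ℝ)-k) / (((q:ℝ)-j) * q)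
                  ≤ (j:ℝ) * q / (((q:ℝ)-j) * q) := by
                    apply div_le_div₀ (by positivity) _ hden le_rfl
                    nlinarith [Nat.cast_nonneg (α := ℝ) j]
                _ = (j:ℝ) / ((q:ℝ)-j) := by
                    rw [mul_div_mul_right _ _ hq0.ne']
                _ ≤ (n:ℝ) / ((q:ℝ)-n) := by
                    apply div_le_div₀ (Nat.cast_nonneg n) hjn hqnpos
                    linarith
          _ = i * ((n:ℝ)/((q:ℝ)-n)) := by rw [sum_const, card_range, nsmul_eq_mul]
          _ ≤ ε := by
              calc (i:ℝ) * ((n:ℝ)/((q:ℝ)-n)) ≤ (n:ℝ) * ((n:ℝ)/((q:ℝ)-n)) := by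
                    apply mul_le_mul_of_nonneg_right _ (by positivity)
                    exact_mod_cast hin
                _ = (n:ℝ)^2 / ((q:ℝ)-n) := by ring
                _ ≤ ε := by
                    rw [hε]
                    exact div_le_div₀ (by positivity) (by nlinarith [Nat.cast_nonneg (α := ℝ) n]) hqnpos le_rfl
      · simp only [hb, if_neg hik]
        have hik' : k < i := by omega
        have hi1 : 1 ≤ i := by omega
        have hkn : (k:ℝ) ≤ n := by
          have : k ≤ n := by omega
          exact_mod_cast this
        rw [zero_sub, abs_neg, abs_of_nonneg (pow_nonneg ht0 i)]
        calc t ^ i ≤ t ^ 1 := pow_le_pow_of_le_one ht0 ht1 hi1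
          _ = t := pow_one t
          _ = (k:ℝ)/q := ht
          _ ≤ (n:ℝ)/((q:ℝ)-n) := by
              apply div_le_div₀ (Nat.cast_nonneg n) hkn hqnpos
              linarith [Nat.cast_nonneg (α := ℝ) n]
          _ ≤ ε := hnqn
    -- sum bound
    have hSbound : |(∑ i ∈ range (n+1), a i * b i) - p t| ≤ A * ε := by
      have hpt : p t = ∑ i ∈ range (n+1), a i * t ^ i := rfl
      rw [hpt, ← Finset.sum_sub_distrib]
      calc |∑ i ∈ range (n+1), (a i * b i - a i * t^i)|
          ≤ ∑ i ∈ range (n+1), |a i * b i - a i * t^i| := Finset.abs_sum_le_sum_abs _ _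
        _ ≤ ∑ i ∈ range (n+1), |a i| * ε := by
            apply sum_le_sum
            intro i hi
            rw [← mul_sub, abs_mul]
            exact mul_le_mul_of_nonneg_left (hbd i hi) (abs_nonneg _)
        _ = A * ε := by rw [← sum_mul]
    have h1 : m ≤ p t := hmle t ⟨ht0, ht1⟩
    have hSpos : 0 < ∑ i ∈ range (n+1), a i * b i := by
      have h2 := (abs_sub_le_iff.mp hSbound).2
      linarith
    have hCk : C k = (q.choose k : ℝ) * ∑ i ∈ range (n+1), a i * b i := by
      rw [hC, mul_sum]
      refine sum_congr rfl fun i hi => ?_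
      by_cases h : i ≤ k
      · simp only [if_pos h, hb]
        rw [aux_choose_real q k i h hkq]
        ring
      · simp only [if_neg h, hb]
        ring
    rw [hCk]
    exact mul_pos (by exact_mod_cast Nat.choose_pos hkq) hSpos
  · -- identity
    intro x
    calc ∑ i ∈ range (n+1), a i * x ^ i
        = ∑ i ∈ range (n+1), ∑ k ∈ range (q+1),
            a i * ((if i ≤ k then ((q-i).choose (k-i) : ℝ) else 0) * x ^ k * (1-x) ^ (q-k)) := by
          refine sum_congr rfl fun i hi => ?_
          have hin : i ≤ q := by have := mem_range.mp hi; omega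
          rw [← mul_sum, ← aux_pow q i hin x]
      _ = ∑ k ∈ range (q+1), C k * x ^ k * (1-x) ^ (q-k) := by
          rw [Finset.sum_comm]
          refine sum_congr rfl fun k hk => ?_
          rw [hC, sum_mul, sum_mul]
          refine sum_congr rfl fun i hi => ?_
          ring
end

section
/- If p: ℝ² → ℝ is a bivariate polynomial of degree at most n₁ in x₁ and n₂ in x₂ with p(x₁,x₂) > 0 for all (x₁,x₂) ∈ [0,1]×[0,1], then there exist q₁ ≥ n₁, q₂ ≥ n₂ and strictly positive reals C_{i,j} for 0 ≤ i ≤ q₁, 0 ≤ j ≤ q₂ such that p(x₁,x₂) = Σ_{i=0}^{q₁} Σ_{j=0}^{q₂} C_{i,j} x₁^i (1-x₁)^{q₁-i} x₂^j (1-x₂)^{q₂-j} for all (x₁,x₂). -/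
open Finset

/-- Bernstein expansion coefficient of `x^i` in degree-`q` basis. -/
noncomputable def Rcoef (q i m : ℕ) : ℝ := if i ≤ m then ((q - i).choose (m - i) : ℝ) else 0

/-- falling-factorial ratio. -/
noncomputable def ffr (q i m : ℕ) : ℝ := ∏ t ∈ range i, (((m : ℝ) - t) / ((q : ℝ) - t))

lemma pow_eq_sum (q i : ℕ) (hi : i ≤ q) (x : ℝ) :
    x ^ i = ∑ m ∈ range (q + 1), Rcoef q i m * x ^ m * (1 - x) ^ (q - m) := by
  have h1 : range (q + 1) = Finset.Ico 0 (q + 1) := by rw [Finset.range_eq_Ico]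
  rw [h1, ← Finset.sum_Ico_consecutive _ (Nat.zero_le i) (by omega : i ≤ q + 1)]
  have h2 : ∑ m ∈ Finset.Ico 0 i, Rcoef q i m * x ^ m * (1 - x) ^ (q - m) = 0 := by
    apply Finset.sum_eq_zero
    intro m hm
    simp only [Finset.mem_Ico] at hm
    simp [Rcoef, if_neg (by omega : ¬ i ≤ m)]
  rw [h2, zero_add, Finset.sum_Ico_eq_sum_range]
  have h3 : q + 1 - i = (q - i) + 1 := by omega
  rw [h3]
  have h4 : ∀ k ∈ range (q - i + 1),
      Rcoef q i (i + k) * x ^ (i + k) * (1 - x) ^ (q - (i + k)) =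
      x ^ i * (x ^ k * (1 - x) ^ (q - i - k) * ((q - i).choose k : ℝ)) := by
    intro k hk
    simp only [Rcoef, if_pos (Nat.le_add_right i k), Nat.add_sub_cancel_left]
    have : q - (i + k) = q - i - k := by omega
    rw [this, pow_add]
    ring
  rw [Finset.sum_congr rfl h4, ← Finset.mul_sum, ← add_pow]
  simp

lemma Rcoef_eq (q i m : ℕ) (hi : i ≤ q) (hm : m ≤ q) :
    Rcoef q i m = (q.choose m : ℝ) * ffr q i m := by
  by_cases h : i ≤ m
  · -- main case
    have hne : ∀ t ∈ range i, ((q : ℝ) - t) ≠ 0 := by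
      intro t ht
      simp only [mem_range] at ht
      have : (t : ℝ) < q := by exact_mod_cast lt_of_lt_of_le ht hi
      linarith
    have hprod : ffr q i m * ∏ t ∈ range i, ((q : ℝ) - t) = ∏ t ∈ range i, ((m : ℝ) - t) := by
      rw [ffr, ← Finset.prod_mul_distrib]
      apply Finset.prod_congr rfl
      intro t ht
      field_simp [hne t ht]
    -- cast descFactorials
    have hqd : (q.descFactorial i : ℝ) = ∏ t ∈ range i, ((q : ℝ) - t) := by
      rw [Nat.descFactorial_eq_prod_range]
      push_cast [Nat.cast_prod]
      apply Finset.prod_congr rfl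
      intro t ht
      simp only [mem_range] at ht
      have : t ≤ q := le_trans (le_of_lt ht) hi
      push_cast [Nat.cast_sub this]
      ring
    have hmd : (m.descFactorial i : ℝ) = ∏ t ∈ range i, ((m : ℝ) - t) := by
      rw [Nat.descFactorial_eq_prod_range]
      push_cast [Nat.cast_prod]
      apply Finset.prod_congr rfl
      intro t ht
      simp only [mem_range] at ht
      have : t ≤ m := le_trans (le_of_lt ht) h
      push_cast [Nat.cast_sub this]
      ring
    -- nat identity
    have hnat : (q - i).choose (m - i) * q.descFactorial i = q.choose m * m.descFactorial i := by
      have h1 := Nat.choose_mul (n := q) h  -- q.choose m * m.choose i = q.choose i * (q-i).choose (m-i)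
      have h2 : q.descFactorial i = Nat.factorial i * q.choose i := Nat.descFactorial_eq_factorial_mul_choose q i
      have h3 : m.descFactorial i = Nat.factorial i * m.choose i := Nat.descFactorial_eq_factorial_mul_choose m i
      calc (q - i).choose (m - i) * q.descFactorial i
          = Nat.factorial i * (q.choose i * (q - i).choose (m - i)) := by rw [h2]; ring
        _ = Nat.factorial i * (q.choose m * m.choose i) := by rw [← h1]
        _ = q.choose m * m.descFactorial i := by rw [h3]; ring
    have hdpos : (0 : ℝ) < (q.descFactorial i : ℝ) := by
      exact_mod_cast Nat.pos_of_ne_zero (fun hc => absurd (Nat.descFactorial_eq_zero_iff_lt.mp hc) (not_lt.mpr hi))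
    have hcast : ((q - i).choose (m - i) : ℝ) * (q.descFactorial i : ℝ)
        = (q.choose m : ℝ) * (m.descFactorial i : ℝ) := by exact_mod_cast congrArg (Nat.cast (R := ℝ)) hnat
    rw [Rcoef, if_pos h]
    have : (q.choose m : ℝ) * ffr q i m * (q.descFactorial i : ℝ)
        = (q.choose m : ℝ) * (m.descFactorial i : ℝ) := by
      rw [hmd, ← hprod, hqd]; ring
    field_simp [ne_of_gt hdpos] at this hcast ⊢
    nlinarith [this, hcast]
  · -- i > m : both sides 0
    rw [Rcoef, if_neg h]
    have : ffr q i m = 0 := by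
      apply Finset.prod_eq_zero (Finset.mem_range.mpr (by omega : m < i))
      simp
    rw [this, mul_zero]


lemma ffr_nonneg (q i m : ℕ) (hm : m ≤ q) : 0 ≤ ffr q i m := by
  by_cases h : i ≤ m
  · apply Finset.prod_nonneg
    intro t ht
    simp only [mem_range] at ht
    have h1 : (t : ℝ) < m := by exact_mod_cast lt_of_lt_of_le ht h
    have h2 : (m : ℝ) ≤ q := by exact_mod_cast hm
    apply div_nonneg <;> linarith
  · have : ffr q i m = 0 := by
      apply Finset.prod_eq_zero (Finset.mem_range.mpr (by omega : m < i))
      simp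
    rw [this]

lemma ffr_le_one (q i m : ℕ) (hm : m ≤ q) : ffr q i m ≤ 1 := by
  by_cases h : i ≤ m
  · apply Finset.prod_le_one
    · intro t ht
      simp only [mem_range] at ht
      have h1 : (t : ℝ) < m := by exact_mod_cast lt_of_lt_of_le ht h
      have h2 : (m : ℝ) ≤ q := by exact_mod_cast hm
      apply div_nonneg <;> linarith
    · intro t ht
      simp only [mem_range] at ht
      have h1 : (t : ℝ) < m := by exact_mod_cast lt_of_lt_of_le ht h
      have h2 : (m : ℝ) ≤ q := by exact_mod_cast hm
      rw [div_le_one (by linarith)]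
      linarith
  · have : ffr q i m = 0 := by
      apply Finset.prod_eq_zero (Finset.mem_range.mpr (by omega : m < i))
      simp
    rw [this]; norm_num

lemma prod_diff (i : ℕ) (a b : ℕ → ℝ) (d : ℝ) (hd : 0 ≤ d)
    (ha : ∀ t < i, a t ∈ Set.Icc (0:ℝ) 1) (hb : ∀ t < i, b t ∈ Set.Icc (0:ℝ) 1)
    (hdiff : ∀ t < i, |a t - b t| ≤ d) :
    |∏ t ∈ range i, a t - ∏ t ∈ range i, b t| ≤ i * d := by
  induction i with
  | zero => simp
  | succ k ih =>
    have ha' : ∀ t < k, a t ∈ Set.Icc (0:ℝ) 1 := fun t ht => ha t (by omega)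
    have hb' : ∀ t < k, b t ∈ Set.Icc (0:ℝ) 1 := fun t ht => hb t (by omega)
    have hdiff' : ∀ t < k, |a t - b t| ≤ d := fun t ht => hdiff t (by omega)
    have IH := ih ha' hb' hdiff'
    rw [Finset.prod_range_succ, Finset.prod_range_succ]
    have hA : ∀ (P : ℕ → ℝ) (hP : ∀ t < k, P t ∈ Set.Icc (0:ℝ) 1),
        (0:ℝ) ≤ ∏ t ∈ range k, P t ∧ (∏ t ∈ range k, P t) ≤ 1 := by
      intro P hP
      constructor
      · exact Finset.prod_nonneg (fun t ht => (hP t (Finset.mem_range.mp ht)).1)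
      · exact Finset.prod_le_one (fun t ht => (hP t (Finset.mem_range.mp ht)).1)
          (fun t ht => (hP t (Finset.mem_range.mp ht)).2)
    obtain ⟨hA0, hA1⟩ := hA a ha'
    obtain ⟨hB0, hB1⟩ := hA b hb'
    have hak := ha k (by omega)
    have hbk := hb k (by omega)
    have hdk := hdiff k (by omega)
    have key : (∏ t ∈ range k, a t) * a k - (∏ t ∈ range k, b t) * b k
        = (∏ t ∈ range k, a t - ∏ t ∈ range k, b t) * a k
          + (∏ t ∈ range k, b t) * (a k - b k) := by ring
    rw [key]
    calc |(∏ t ∈ range k, a t - ∏ t ∈ range k, b t) * a k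
          + (∏ t ∈ range k, b t) * (a k - b k)|
        ≤ |(∏ t ∈ range k, a t - ∏ t ∈ range k, b t) * a k|
          + |(∏ t ∈ range k, b t) * (a k - b k)| := abs_add_le _ _
      _ ≤ |∏ t ∈ range k, a t - ∏ t ∈ range k, b t| * 1
          + 1 * |a k - b k| := by
          rw [abs_mul, abs_mul]
          have h1 : |a k| ≤ 1 := by rw [abs_le]; exact ⟨by linarith [hak.1], hak.2⟩
          have h2 : |∏ t ∈ range k, b t| ≤ 1 := by rw [abs_le]; exact ⟨by linarith, hB1⟩
          exact add_le_add
            (mul_le_mul_of_nonneg_left h1 (abs_nonneg _))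
            (mul_le_mul_of_nonneg_right h2 (abs_nonneg _))
      _ ≤ k * d + d := by rw [mul_one, one_mul]; exact add_le_add IH hdk
      _ = (k + 1 : ℕ) * d := by push_cast; ring

lemma ffr_est (n q i m : ℕ) (hq : n < q) (hi : i ≤ n) (hm : m ≤ q) :
    |ffr q i m - ((m : ℝ) / q) ^ i| ≤ (n : ℝ) ^ 2 / ((q : ℝ) - n) := by
  have hqn : (0 : ℝ) < (q : ℝ) - n := by
    have : (n : ℝ) < q := by exact_mod_cast hq
    linarith
  have hq0 : (0 : ℝ) < q := lt_of_le_of_lt (Nat.cast_nonneg n) (by exact_mod_cast hq)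
  have hmq : (m : ℝ) ≤ q := by exact_mod_cast hm
  have hn2 : (0 : ℝ) ≤ (n : ℝ) ^ 2 / ((q : ℝ) - n) := by positivity
  rcases Nat.eq_zero_or_pos i with hi0 | hi1
  · subst hi0; simp [ffr, hn2]
  have hn1 : (1 : ℝ) ≤ n := by exact_mod_cast le_trans hi1 hi
  have hu0 : (0 : ℝ) ≤ (m : ℝ) / q := by positivity
  have hu1 : (m : ℝ) / q ≤ 1 := by rw [div_le_one hq0]; exact hmq
  by_cases h : i ≤ m
  · -- main case via prod_diff
    have hb : ((m : ℝ) / q) ^ i = ∏ t ∈ range i, ((m : ℝ) / q) := by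
      rw [Finset.prod_const, Finset.card_range]
    rw [hb, ffr]
    have key := prod_diff i (fun t => ((m : ℝ) - t) / ((q : ℝ) - t)) (fun _ => (m : ℝ) / q)
        ((n : ℝ) / ((q : ℝ) - n)) (by positivity)
        (by
          intro t ht
          have htm : (t : ℝ) < m := by exact_mod_cast lt_of_lt_of_le ht h
          have htq : (t : ℝ) < q := by linarith
          constructor
          · apply div_nonneg <;> linarith
          · rw [div_le_one (by linarith)]; linarith)
        (by intro t ht; exact ⟨hu0, hu1⟩)
        (by
          intro t ht
          have htn : (t : ℝ) ≤ n := by exact_mod_cast le_trans (Nat.le_of_lt_succ (by omega)) (by omega : i - 1 ≤ n)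
          have htq : (t : ℝ) < q := by linarith
          have hqt : ((q : ℝ) - t) ≠ 0 := by linarith
          have hq0' : (q : ℝ) ≠ 0 := ne_of_gt hq0
          have heq : ((m : ℝ) - t) / ((q : ℝ) - t) - (m : ℝ) / q
              = -((t * ((q : ℝ) - m)) / (q * ((q : ℝ) - t))) := by
            rw [div_sub_div _ _ hqt hq0',
              show ((m : ℝ) - t) * q - ((q : ℝ) - t) * m = -(t * ((q : ℝ) - m)) by ring,
              mul_comm ((q : ℝ) - t) (q : ℝ), neg_div]
          rw [heq, abs_neg, abs_of_nonneg (by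
            apply div_nonneg
            · apply mul_nonneg (by exact_mod_cast Nat.zero_le t); linarith
            · apply mul_nonneg <;> linarith)]
          rw [div_le_div_iff₀ (by nlinarith) hqn]
          have htn0 : (0 : ℝ) ≤ t := by exact_mod_cast Nat.zero_le t
          have e1 : (t : ℝ) * ((q : ℝ) - m) ≤ (n : ℝ) * q :=
            mul_le_mul htn (by linarith) (by linarith) (by linarith)
          have e2 : ((q : ℝ) - n) ≤ ((q : ℝ) - t) := by linarith
          calc (t : ℝ) * ((q : ℝ) - m) * ((q : ℝ) - n)
              ≤ (n : ℝ) * q * ((q : ℝ) - t) :=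
                mul_le_mul e1 e2 (le_of_lt hqn) (by positivity)
            _ = (n : ℝ) * ((q : ℝ) * ((q : ℝ) - t)) := by ring)
    calc |∏ t ∈ range i, (((m : ℝ) - t) / ((q : ℝ) - t)) - ∏ t ∈ range i, ((m : ℝ) / q)|
        ≤ i * ((n : ℝ) / ((q : ℝ) - n)) := key
      _ ≤ n * ((n : ℝ) / ((q : ℝ) - n)) := by
          apply mul_le_mul_of_nonneg_right (by exact_mod_cast hi) (by positivity)
      _ = (n : ℝ) ^ 2 / ((q : ℝ) - n) := by ring
  · -- m < i : ffr = 0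
    have hf0 : ffr q i m = 0 := by
      apply Finset.prod_eq_zero (Finset.mem_range.mpr (by omega : m < i))
      simp
    rw [hf0, zero_sub, abs_neg, abs_of_nonneg (by positivity)]
    have h1 : ((m : ℝ) / q) ^ i ≤ (m : ℝ) / q :=
      pow_le_of_le_one hu0 hu1 (by omega)
    have h2 : (m : ℝ) / q ≤ (n : ℝ) / ((q : ℝ) - n) := by
      apply div_le_div₀ (by positivity) _ hqn (by linarith)
      exact_mod_cast le_trans (by omega : m ≤ n) le_rfl
    have h3 : (n : ℝ) / ((q : ℝ) - n) ≤ (n : ℝ) ^ 2 / ((q : ℝ) - n) :=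
      div_le_div₀ (by positivity) (by nlinarith) hqn le_rfl
    linarith

theorem stmt_7 (n₁ n₂ : ℕ) (a : ℕ → ℕ → ℝ)
    (hpos : ∀ x₁ ∈ Set.Icc (0 : ℝ) 1, ∀ x₂ ∈ Set.Icc (0 : ℝ) 1,
      0 < ∑ i ∈ range (n₁ + 1), ∑ j ∈ range (n₂ + 1), a i j * x₁ ^ i * x₂ ^ j) :
    ∃ q₁, n₁ ≤ q₁ ∧ ∃ q₂, n₂ ≤ q₂ ∧ ∃ C : ℕ → ℕ → ℝ,
      (∀ i ≤ q₁, ∀ j ≤ q₂, 0 < C i j) ∧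
      ∀ x₁ x₂ : ℝ,
        ∑ i ∈ range (n₁ + 1), ∑ j ∈ range (n₂ + 1), a i j * x₁ ^ i * x₂ ^ j =
          ∑ i ∈ range (q₁ + 1), ∑ j ∈ range (q₂ + 1),
            C i j * x₁ ^ i * (1 - x₁) ^ (q₁ - i) * x₂ ^ j * (1 - x₂) ^ (q₂ - j) := by
  classical
  set p2 : ℝ × ℝ → ℝ :=
    fun z => ∑ i ∈ range (n₁ + 1), ∑ j ∈ range (n₂ + 1), a i j * z.1 ^ i * z.2 ^ j with hp2
  have hcont : Continuous p2 := by
    apply continuous_finset_sum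
    intro i _
    apply continuous_finset_sum
    intro j _
    exact (continuous_const.mul (continuous_fst.pow i)).mul (continuous_snd.pow j)
  have hK : IsCompact (Set.Icc (0:ℝ) 1 ×ˢ Set.Icc (0:ℝ) 1) := isCompact_Icc.prod isCompact_Icc
  obtain ⟨z₀, hz₀, hmin⟩ := hK.exists_isMinOn
    ⟨(0, 0), by constructor <;> exact ⟨le_rfl, zero_le_one⟩⟩ hcont.continuousOn
  set δ : ℝ := p2 z₀ with hδdef
  have hδ : 0 < δ := hpos z₀.1 hz₀.1 z₀.2 hz₀.2
  set A : ℝ := ∑ i ∈ range (n₁ + 1), ∑ j ∈ range (n₂ + 1), |a i j| with hA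
  have hA0 : 0 ≤ A := Finset.sum_nonneg fun i _ =>
    Finset.sum_nonneg fun j _ => abs_nonneg _
  obtain ⟨K, hKgt⟩ := exists_nat_gt ((A * ((n₁:ℝ)^2 + (n₂:ℝ)^2) + 1) / δ)
  have hKpos : (0:ℝ) < K := lt_of_le_of_lt (by positivity) hKgt
  have hK1 : 1 ≤ K := by exact_mod_cast Nat.one_le_iff_ne_zero.mpr (by
    intro h; rw [h] at hKpos; simp at hKpos)
  set q₁ := n₁ + K with hq₁
  set q₂ := n₂ + K with hq₂
  have hq₁n : n₁ < q₁ := by omega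
  have hq₂n : n₂ < q₂ := by omega
  have hq₁K : ((q₁:ℝ) - n₁) = K := by rw [hq₁]; push_cast; ring
  have hq₂K : ((q₂:ℝ) - n₂) = K := by rw [hq₂]; push_cast; ring
  set S : ℕ → ℕ → ℝ := fun m₁ m₂ =>
    ∑ i ∈ range (n₁ + 1), ∑ j ∈ range (n₂ + 1), a i j * ffr q₁ i m₁ * ffr q₂ j m₂ with hS
  -- positivity of S
  have hSpos : ∀ m₁ ≤ q₁, ∀ m₂ ≤ q₂, 0 < S m₁ m₂ := by
    intro m₁ hm₁ m₂ hm₂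
    have hq₁0 : (0:ℝ) < q₁ := by
      have : (0:ℕ) < q₁ := by omega
      exact_mod_cast this
    have hq₂0 : (0:ℝ) < q₂ := by
      have : (0:ℕ) < q₂ := by omega
      exact_mod_cast this
    set u : ℝ := (m₁ : ℝ) / q₁ with hu
    set v : ℝ := (m₂ : ℝ) / q₂ with hv
    have hu01 : u ∈ Set.Icc (0:ℝ) 1 := by
      constructor
      · positivity
      · rw [hu, div_le_one hq₁0]; exact_mod_cast hm₁
    have hv01 : v ∈ Set.Icc (0:ℝ) 1 := by
      constructor
      · positivity
      · rw [hv, div_le_one hq₂0]; exact_mod_cast hm₂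
    have hP : δ ≤ p2 (u, v) := hmin (Set.mk_mem_prod hu01 hv01)
    set B₁ : ℝ := (n₁:ℝ)^2 / ((q₁:ℝ) - n₁) with hB₁
    set B₂ : ℝ := (n₂:ℝ)^2 / ((q₂:ℝ) - n₂) with hB₂
    have hB₁0 : 0 ≤ B₁ := by rw [hB₁, hq₁K]; positivity
    have hB₂0 : 0 ≤ B₂ := by rw [hB₂, hq₂K]; positivity
    -- per-term bound
    have hterm : ∀ i ∈ range (n₁ + 1), ∀ j ∈ range (n₂ + 1),
        |a i j * ffr q₁ i m₁ * ffr q₂ j m₂ - a i j * u ^ i * v ^ j|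
          ≤ |a i j| * (B₁ + B₂) := by
      intro i hi j hj
      simp only [mem_range] at hi hj
      have hest₁ := ffr_est n₁ q₁ i m₁ hq₁n (by omega) hm₁
      have hest₂ := ffr_est n₂ q₂ j m₂ hq₂n (by omega) hm₂
      have hg0 := ffr_nonneg q₂ j m₂ hm₂
      have hg1 := ffr_le_one q₂ j m₂ hm₂
      have hui0 : 0 ≤ u ^ i := pow_nonneg hu01.1 i
      have hui1 : u ^ i ≤ 1 := pow_le_one₀ hu01.1 hu01.2
      have key : a i j * ffr q₁ i m₁ * ffr q₂ j m₂ - a i j * u ^ i * v ^ j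
          = a i j * ((ffr q₁ i m₁ - u ^ i) * ffr q₂ j m₂
            + u ^ i * (ffr q₂ j m₂ - v ^ j)) := by ring
      rw [key, abs_mul]
      apply mul_le_mul_of_nonneg_left _ (abs_nonneg _)
      calc |(ffr q₁ i m₁ - u ^ i) * ffr q₂ j m₂ + u ^ i * (ffr q₂ j m₂ - v ^ j)|
          ≤ |(ffr q₁ i m₁ - u ^ i) * ffr q₂ j m₂| + |u ^ i * (ffr q₂ j m₂ - v ^ j)| :=
            abs_add_le _ _
        _ ≤ |ffr q₁ i m₁ - u ^ i| * 1 + 1 * |ffr q₂ j m₂ - v ^ j| := by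
            rw [abs_mul, abs_mul]
            apply add_le_add
            · apply mul_le_mul_of_nonneg_left _ (abs_nonneg _)
              rw [abs_le]; exact ⟨by linarith, hg1⟩
            · apply mul_le_mul_of_nonneg_right _ (abs_nonneg _)
              rw [abs_le]; exact ⟨by linarith, hui1⟩
        _ ≤ B₁ + B₂ := by
            rw [mul_one, one_mul]
            have huq : ((m₁:ℝ)/(q₁:ℝ)) = u := rfl
            have hvq : ((m₂:ℝ)/(q₂:ℝ)) = v := rfl
            rw [huq] at hest₁; rw [hvq] at hest₂
            exact add_le_add hest₁ hest₂
    -- sum bound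
    have hsum : |S m₁ m₂ - p2 (u, v)| ≤ A * (B₁ + B₂) := by
      have hdiff : S m₁ m₂ - p2 (u, v)
          = ∑ i ∈ range (n₁ + 1), ∑ j ∈ range (n₂ + 1),
              (a i j * ffr q₁ i m₁ * ffr q₂ j m₂ - a i j * u ^ i * v ^ j) := by
        rw [hS, hp2]
        simp only [← Finset.sum_sub_distrib]
      rw [hdiff]
      calc |∑ i ∈ range (n₁ + 1), ∑ j ∈ range (n₂ + 1),
              (a i j * ffr q₁ i m₁ * ffr q₂ j m₂ - a i j * u ^ i * v ^ j)|
          ≤ ∑ i ∈ range (n₁ + 1), ∑ j ∈ range (n₂ + 1),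
              |a i j * ffr q₁ i m₁ * ffr q₂ j m₂ - a i j * u ^ i * v ^ j| := by
            calc _ ≤ ∑ i ∈ range (n₁ + 1), |∑ j ∈ range (n₂ + 1),
                (a i j * ffr q₁ i m₁ * ffr q₂ j m₂ - a i j * u ^ i * v ^ j)| :=
                  Finset.abs_sum_le_sum_abs _ _
              _ ≤ _ := Finset.sum_le_sum fun i _ => Finset.abs_sum_le_sum_abs _ _
        _ ≤ ∑ i ∈ range (n₁ + 1), ∑ j ∈ range (n₂ + 1), |a i j| * (B₁ + B₂) :=
            Finset.sum_le_sum fun i hi => Finset.sum_le_sum fun j hj => hterm i hi j hj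
        _ = A * (B₁ + B₂) := by
            rw [hA, Finset.sum_mul]
            apply Finset.sum_congr rfl
            intro i _
            rw [Finset.sum_mul]
    -- final
    have hABsmall : A * (B₁ + B₂) < δ := by
      rw [hB₁, hB₂, hq₁K, hq₂K]
      have h1 : A * ((n₁:ℝ)^2 + (n₂:ℝ)^2) + 1 < K * δ := by
        rw [div_lt_iff₀ hδ] at hKgt
        linarith
      rw [← add_div, ← mul_div_assoc, div_lt_iff₀ hKpos]
      nlinarith
    have := abs_le.mp hsum
    linarith [this.1, this.2, hP]
  refine ⟨q₁, by omega, q₂, by omega, fun m₁ m₂ =>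
    (q₁.choose m₁ : ℝ) * (q₂.choose m₂ : ℝ) * S m₁ m₂, ?_, ?_⟩
  · intro m₁ hm₁ m₂ hm₂
    have h1 : (0:ℝ) < (q₁.choose m₁ : ℝ) := by exact_mod_cast Nat.choose_pos hm₁
    have h2 : (0:ℝ) < (q₂.choose m₂ : ℝ) := by exact_mod_cast Nat.choose_pos hm₂
    exact mul_pos (mul_pos h1 h2) (hSpos m₁ hm₁ m₂ hm₂)
  · intro x₁ x₂
    have hIle : ∀ i ∈ range (n₁ + 1), i ≤ q₁ := by
      intro i hi; simp only [mem_range] at hi; omega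
    have hJle : ∀ j ∈ range (n₂ + 1), j ≤ q₂ := by
      intro j hj; simp only [mem_range] at hj; omega
    calc ∑ i ∈ range (n₁ + 1), ∑ j ∈ range (n₂ + 1), a i j * x₁ ^ i * x₂ ^ j
        = ∑ i ∈ range (n₁ + 1), ∑ j ∈ range (n₂ + 1), ∑ m₁ ∈ range (q₁ + 1),
            ∑ m₂ ∈ range (q₂ + 1),
            (a i j * Rcoef q₁ i m₁ * Rcoef q₂ j m₂) *
              (x₁ ^ m₁ * (1 - x₁) ^ (q₁ - m₁) * (x₂ ^ m₂ * (1 - x₂) ^ (q₂ - m₂))) := by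
          apply Finset.sum_congr rfl; intro i hi
          apply Finset.sum_congr rfl; intro j hj
          rw [pow_eq_sum q₁ i (hIle i hi) x₁, pow_eq_sum q₂ j (hJle j hj) x₂,
            mul_assoc, Finset.sum_mul_sum, Finset.mul_sum]
          apply Finset.sum_congr rfl; intro m₁ _
          rw [Finset.mul_sum]
          apply Finset.sum_congr rfl; intro m₂ _
          ring
      _ = ∑ m₁ ∈ range (q₁ + 1), ∑ m₂ ∈ range (q₂ + 1), ∑ i ∈ range (n₁ + 1),
            ∑ j ∈ range (n₂ + 1),
            (a i j * Rcoef q₁ i m₁ * Rcoef q₂ j m₂) *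
              (x₁ ^ m₁ * (1 - x₁) ^ (q₁ - m₁) * (x₂ ^ m₂ * (1 - x₂) ^ (q₂ - m₂))) := by
          rw [show (∑ i ∈ range (n₁ + 1), ∑ j ∈ range (n₂ + 1), ∑ m₁ ∈ range (q₁ + 1),
              ∑ m₂ ∈ range (q₂ + 1),
              (a i j * Rcoef q₁ i m₁ * Rcoef q₂ j m₂) *
                (x₁ ^ m₁ * (1 - x₁) ^ (q₁ - m₁) * (x₂ ^ m₂ * (1 - x₂) ^ (q₂ - m₂))))
              = ∑ i ∈ range (n₁ + 1), ∑ m₁ ∈ range (q₁ + 1), ∑ j ∈ range (n₂ + 1),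
              ∑ m₂ ∈ range (q₂ + 1),
              (a i j * Rcoef q₁ i m₁ * Rcoef q₂ j m₂) *
                (x₁ ^ m₁ * (1 - x₁) ^ (q₁ - m₁) * (x₂ ^ m₂ * (1 - x₂) ^ (q₂ - m₂)))
            from Finset.sum_congr rfl fun i _ => Finset.sum_comm]
          rw [Finset.sum_comm]
          apply Finset.sum_congr rfl; intro m₁ _
          rw [show (∑ i ∈ range (n₁ + 1), ∑ j ∈ range (n₂ + 1), ∑ m₂ ∈ range (q₂ + 1),
              (a i j * Rcoef q₁ i m₁ * Rcoef q₂ j m₂) *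
                (x₁ ^ m₁ * (1 - x₁) ^ (q₁ - m₁) * (x₂ ^ m₂ * (1 - x₂) ^ (q₂ - m₂))))
              = ∑ i ∈ range (n₁ + 1), ∑ m₂ ∈ range (q₂ + 1), ∑ j ∈ range (n₂ + 1),
              (a i j * Rcoef q₁ i m₁ * Rcoef q₂ j m₂) *
                (x₁ ^ m₁ * (1 - x₁) ^ (q₁ - m₁) * (x₂ ^ m₂ * (1 - x₂) ^ (q₂ - m₂)))
            from Finset.sum_congr rfl fun i _ => Finset.sum_comm]
          rw [Finset.sum_comm]
      _ = ∑ m₁ ∈ range (q₁ + 1), ∑ m₂ ∈ range (q₂ + 1),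
            (q₁.choose m₁ : ℝ) * (q₂.choose m₂ : ℝ) * S m₁ m₂ * x₁ ^ m₁ *
              (1 - x₁) ^ (q₁ - m₁) * x₂ ^ m₂ * (1 - x₂) ^ (q₂ - m₂) := by
          apply Finset.sum_congr rfl; intro m₁ hm₁
          apply Finset.sum_congr rfl; intro m₂ hm₂
          simp only [mem_range] at hm₁ hm₂
          have hm₁' : m₁ ≤ q₁ := by omega
          have hm₂' : m₂ ≤ q₂ := by omega
          have hcoef : ∀ i ∈ range (n₁ + 1), ∀ j ∈ range (n₂ + 1),
              a i j * Rcoef q₁ i m₁ * Rcoef q₂ j m₂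
              = (q₁.choose m₁ : ℝ) * (q₂.choose m₂ : ℝ) *
                  (a i j * ffr q₁ i m₁ * ffr q₂ j m₂) := by
            intro i hi j hj
            rw [Rcoef_eq q₁ i m₁ (hIle i hi) hm₁', Rcoef_eq q₂ j m₂ (hJle j hj) hm₂']
            ring
          calc ∑ i ∈ range (n₁ + 1), ∑ j ∈ range (n₂ + 1),
              (a i j * Rcoef q₁ i m₁ * Rcoef q₂ j m₂) *
                (x₁ ^ m₁ * (1 - x₁) ^ (q₁ - m₁) * (x₂ ^ m₂ * (1 - x₂) ^ (q₂ - m₂)))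
              = (∑ i ∈ range (n₁ + 1), ∑ j ∈ range (n₂ + 1),
                  a i j * Rcoef q₁ i m₁ * Rcoef q₂ j m₂) *
                (x₁ ^ m₁ * (1 - x₁) ^ (q₁ - m₁) * (x₂ ^ m₂ * (1 - x₂) ^ (q₂ - m₂))) := by
                rw [Finset.sum_mul]
                apply Finset.sum_congr rfl; intro i _
                rw [Finset.sum_mul]
            _ = ((q₁.choose m₁ : ℝ) * (q₂.choose m₂ : ℝ) * S m₁ m₂) *
                (x₁ ^ m₁ * (1 - x₁) ^ (q₁ - m₁) * (x₂ ^ m₂ * (1 - x₂) ^ (q₂ - m₂))) := by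
                congr 1
                rw [hS]
                rw [Finset.mul_sum]
                apply Finset.sum_congr rfl; intro i hi
                rw [Finset.mul_sum]
                apply Finset.sum_congr rfl; intro j hj
                exact hcoef i hi j hj
            _ = (q₁.choose m₁ : ℝ) * (q₂.choose m₂ : ℝ) * S m₁ m₂ * x₁ ^ m₁ *
                (1 - x₁) ^ (q₁ - m₁) * x₂ ^ m₂ * (1 - x₂) ^ (q₂ - m₂) := by ring
end

section
/- For integers q₁ ≥ 1, 0 ≤ i ≤ q₁, and 0 ≤ k ≤ q₁, the quantity φ_k^{q₁}(i) = (k/q₁)^i − binomial(k,i)/binomial(q₁,i) satisfies 0 ≤ φ_k^{q₁}(i) ≤ ((q₁−1)/q₁²) · i(i−1)/2, where binomial(k,i) = 0 if k < i. -/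
set_option maxHeartbeats 1000000

open Finset

lemma key_aux (q k : ℕ) (hq : 1 ≤ q) (hk : k ≤ q) :
    ∀ i, i ≤ k → 0 ≤ ((k : ℝ) / q) ^ i - (k.choose i : ℝ) / (q.choose i : ℝ) ∧
      ((k : ℝ) / q) ^ i - (k.choose i : ℝ) / (q.choose i : ℝ) ≤
        (((q : ℝ) - 1) / (q : ℝ) ^ 2) * ((i : ℝ) * ((i : ℝ) - 1) / 2) := by
  intro i
  induction i with
  | zero => intro _; norm_num
  | succ i ih =>
    intro hik
    have hik' : i ≤ k := Nat.le_of_succ_le hik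
    obtain ⟨IH1, IH2⟩ := ih hik'
    have hiq : i < q := lt_of_lt_of_le hik hk
    have hQ : (1 : ℝ) ≤ (q : ℝ) := by exact_mod_cast hq
    have hQ0 : (0 : ℝ) < q := by linarith
    have hKQ : (k : ℝ) ≤ q := by exact_mod_cast hk
    have hK0 : (0 : ℝ) ≤ k := Nat.cast_nonneg k
    have hIK : (i : ℝ) + 1 ≤ k := by exact_mod_cast hik
    have hIQ : (i : ℝ) < q := by exact_mod_cast hiq
    have hI0 : (0 : ℝ) ≤ i := Nat.cast_nonneg i
    have cqi : (0 : ℝ) < (q.choose i : ℝ) := by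
      exact_mod_cast Nat.choose_pos (le_of_lt hiq)
    have cqi1 : (0 : ℝ) < (q.choose (i + 1) : ℝ) := by
      exact_mod_cast Nat.choose_pos hiq
    have cki : (0 : ℝ) ≤ (k.choose i : ℝ) := Nat.cast_nonneg _
    -- recurrences
    have reck : (k.choose (i + 1) : ℝ) * (i + 1) = (k.choose i : ℝ) * ((k : ℝ) - i) := by
      have := Nat.choose_succ_right_eq k i
      have h2 : ((k.choose (i+1) * (i+1) : ℕ) : ℝ) = ((k.choose i * (k - i) : ℕ) : ℝ) := by
        exact_mod_cast congrArg (Nat.cast : ℕ → ℝ) this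
      push_cast [Nat.cast_sub hik'] at h2
      linarith [h2]
    have recq : (q.choose (i + 1) : ℝ) * (i + 1) = (q.choose i : ℝ) * ((q : ℝ) - i) := by
      have := Nat.choose_succ_right_eq q i
      have h2 : ((q.choose (i+1) * (i+1) : ℕ) : ℝ) = ((q.choose i * (q - i) : ℕ) : ℝ) := by
        exact_mod_cast congrArg (Nat.cast : ℕ → ℝ) this
      push_cast [Nat.cast_sub (le_of_lt hiq)] at h2
      linarith [h2]
    have hQI0 : (0 : ℝ) < (q : ℝ) - i := by linarith
    have hI1 : (0 : ℝ) < (i : ℝ) + 1 := by linarith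
    -- ratio recurrence
    have ratio : (k.choose (i+1) : ℝ) / (q.choose (i+1) : ℝ) =
        ((k.choose i : ℝ) / (q.choose i : ℝ)) * (((k : ℝ) - i) / ((q : ℝ) - i)) := by
      rw [div_mul_div_comm]
      rw [div_eq_div_iff cqi1.ne' (by positivity)]
      nlinarith [reck, recq]
    -- r ≤ 1
    have hr1 : (k.choose i : ℝ) / (q.choose i : ℝ) ≤ 1 := by
      rw [div_le_one cqi]
      exact_mod_cast Nat.choose_le_choose i hk
    have hr0 : (0 : ℝ) ≤ (k.choose i : ℝ) / (q.choose i : ℝ) := by positivity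
    have ha0 : (0 : ℝ) ≤ (k : ℝ) / q := by positivity
    have ha1 : (k : ℝ) / q ≤ 1 := by rw [div_le_one hQ0]; exact hKQ
    set r : ℝ := (k.choose i : ℝ) / (q.choose i : ℝ) with hr
    set a : ℝ := (k : ℝ) / q with haa
    -- d := a - (K-i)/(Q-i)
    have hd0 : (0 : ℝ) ≤ a - ((k : ℝ) - i) / ((q : ℝ) - i) := by
      rw [haa, sub_nonneg, div_le_div_iff₀ hQI0 hQ0]
      nlinarith
    have hdub : a - ((k : ℝ) - i) / ((q : ℝ) - i) ≤ ((q : ℝ) - 1) / (q : ℝ) ^ 2 * i := by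
      have h0 : (0 : ℝ) ≤ (q : ℝ) * ((k : ℝ) - i - 1) + i := by nlinarith
      rw [haa, div_sub_div _ _ hQ0.ne' hQI0.ne', div_mul_eq_mul_div,
        div_le_div_iff₀ (by positivity) (by positivity)]
      nlinarith [mul_nonneg (mul_nonneg hI0 hQ0.le) h0]
    have hpow : a ^ (i + 1) - (k.choose (i+1) : ℝ) / (q.choose (i+1) : ℝ)
        = a * (a ^ i - r) + r * (a - ((k : ℝ) - i) / ((q : ℝ) - i)) := by
      rw [ratio]; ring
    constructor
    · rw [hpow]
      have h1 : 0 ≤ a * (a ^ i - r) := mul_nonneg ha0 IH1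
      have h2 : 0 ≤ r * (a - ((k : ℝ) - i) / ((q : ℝ) - i)) := mul_nonneg hr0 hd0
      linarith
    · rw [hpow]
      have h1 : a * (a ^ i - r) ≤ a ^ i - r := by nlinarith
      have h2 : r * (a - ((k : ℝ) - i) / ((q : ℝ) - i)) ≤ ((q : ℝ) - 1) / (q : ℝ) ^ 2 * i := by
        nlinarith [mul_le_mul hr1 hdub hd0 (zero_le_one)]
      have hB : ((q : ℝ) - 1) / (q : ℝ) ^ 2 * ((i : ℝ) * ((i : ℝ) - 1) / 2)
          + ((q : ℝ) - 1) / (q : ℝ) ^ 2 * i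
          = ((q : ℝ) - 1) / (q : ℝ) ^ 2 * (((i : ℝ) + 1) * (((i : ℝ) + 1) - 1) / 2) := by ring
      push_cast
      nlinarith [IH2]

theorem stmt_10 (q₁ i k : ℕ) (hq : 1 ≤ q₁) (hi : i ≤ q₁) (hk : k ≤ q₁) :
    0 ≤ ((k : ℝ) / q₁) ^ i - (k.choose i : ℝ) / (q₁.choose i : ℝ) ∧
      ((k : ℝ) / q₁) ^ i - (k.choose i : ℝ) / (q₁.choose i : ℝ) ≤
        (((q₁ : ℝ) - 1) / (q₁ : ℝ) ^ 2) * ((i : ℝ) * ((i : ℝ) - 1) / 2) := by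
  rcases le_or_gt i k with h | h
  · exact key_aux q₁ k hq hk i h
  · -- k < i, so k.choose i = 0
    have hc : k.choose i = 0 := Nat.choose_eq_zero_of_lt h
    have hQ : (1 : ℝ) ≤ (q₁ : ℝ) := by exact_mod_cast hq
    have hQ0 : (0 : ℝ) < q₁ := by linarith
    have ha0 : (0 : ℝ) ≤ (k : ℝ) / q₁ := by positivity
    rw [hc]
    simp only [Nat.cast_zero, zero_div, sub_zero]
    constructor
    · positivity
    · rcases Nat.eq_zero_or_pos k with hk0 | hk0
      · subst hk0
        have hi1 : 1 ≤ i := h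
        have : ((0 : ℕ) : ℝ) / q₁ = 0 := by norm_num
        rw [this, zero_pow (by omega)]
        have hi1' : (1 : ℝ) ≤ i := by exact_mod_cast hi1
        have h1 : (0:ℝ) ≤ ((q₁ : ℝ) - 1) / (q₁ : ℝ) ^ 2 := by
          apply div_nonneg (by linarith) (by positivity)
        apply mul_nonneg h1
        nlinarith
      · have hi2 : 2 ≤ i := by omega
        have hki : (k : ℝ) ≤ (i : ℝ) - 1 := by
          have : k + 1 ≤ i := h
          have := (Nat.cast_le (α := ℝ)).2 this
          push_cast at this; linarith
        have ha1 : (k : ℝ) / q₁ ≤ 1 := by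
          rw [div_le_one hQ0]; exact_mod_cast hk
        have step1 : ((k : ℝ) / q₁) ^ i ≤ ((k : ℝ) / q₁) ^ 2 :=
          pow_le_pow_of_le_one ha0 ha1 hi2
        have step2 : ((k : ℝ) / q₁) ^ 2 ≤ (((i : ℝ) - 1) / q₁) ^ 2 := by
          have hle : (k : ℝ) / q₁ ≤ ((i : ℝ) - 1) / q₁ := by gcongr
          exact pow_le_pow_left₀ ha0 hle 2
        have hIQ : (i : ℝ) ≤ q₁ := by exact_mod_cast hi
        have hi2' : (2 : ℝ) ≤ i := by exact_mod_cast hi2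
        have step3 : (((i : ℝ) - 1) / q₁) ^ 2 ≤
            (((q₁ : ℝ) - 1) / (q₁ : ℝ) ^ 2) * ((i : ℝ) * ((i : ℝ) - 1) / 2) := by
          rw [div_pow, show (((q₁ : ℝ) - 1) / (q₁ : ℝ) ^ 2) * ((i : ℝ) * ((i : ℝ) - 1) / 2)
                = (((q₁ : ℝ) - 1) * ((i : ℝ) * ((i : ℝ) - 1)) / 2) / (q₁ : ℝ) ^ 2 by ring,
            div_le_div_iff_of_pos_right (by positivity)]
          nlinarith
        linarith
end

section
/- For integers q₁ ≥ 1, i ≥ 2 and i ≤ k ≤ q₁ − 1, we have (k/q₁)^i − binomial(k,i)/binomial(q₁,i) = (k/q₁)^i [1 − Π_{r=0}^{i−1} (1 − r/k)/(1 − r/q₁)], and this quantity is at most (k/q₁)^{i−1} · i(i−1)/(2q₁). -/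
open Finset

lemma aux_one_sub_prod (s : Finset ℕ) (f : ℕ → ℝ)
    (h0 : ∀ j ∈ s, 0 ≤ f j) (h1 : ∀ j ∈ s, f j ≤ 1) :
    1 - ∏ j ∈ s, f j ≤ ∑ j ∈ s, (1 - f j) := by
  induction s using Finset.cons_induction with
  | empty => simp
  | cons a s ha ih =>
    rw [prod_cons, sum_cons]
    have h0a := h0 a (mem_cons_self a s)
    have h1a := h1 a (mem_cons_self a s)
    have h0' : ∀ j ∈ s, 0 ≤ f j := fun j hj => h0 j (mem_cons_of_mem hj)
    have h1' : ∀ j ∈ s, f j ≤ 1 := fun j hj => h1 j (mem_cons_of_mem hj)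
    have hprod0 : 0 ≤ ∏ j ∈ s, f j := prod_nonneg h0'
    have hprod1 : ∏ j ∈ s, f j ≤ 1 := prod_le_one h0' h1'
    have := ih h0' h1'
    nlinarith

theorem stmt_12 (q₁ i k : ℕ) (hq : 1 ≤ q₁) (hi : 2 ≤ i) (hik : i ≤ k) (hk : k ≤ q₁ - 1) :
    ((k : ℝ) / q₁) ^ i - (k.choose i : ℝ) / (q₁.choose i : ℝ) =
        ((k : ℝ) / q₁) ^ i * (1 - ∏ r ∈ range i, (1 - (r : ℝ) / k) / (1 - (r : ℝ) / q₁)) ∧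
      ((k : ℝ) / q₁) ^ i - (k.choose i : ℝ) / (q₁.choose i : ℝ) ≤
        ((k : ℝ) / q₁) ^ (i - 1) * ((i : ℝ) * ((i : ℝ) - 1)) / (2 * q₁) := by
  have hkq : k < q₁ := by omega
  have hkR : (0:ℝ) < k := by exact_mod_cast (by omega : 0 < k)
  have hqR : (0:ℝ) < q₁ := by exact_mod_cast (by omega : 0 < q₁)
  have hkqR : (k:ℝ) < q₁ := by exact_mod_cast hkq
  -- key product identity
  have key : ((k : ℝ) / q₁) ^ i * ∏ r ∈ range i, (1 - (r : ℝ) / k) / (1 - (r : ℝ) / q₁)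
      = (k.choose i : ℝ) / (q₁.choose i : ℝ) := by
    have h1 : ((k : ℝ) / q₁) ^ i * ∏ r ∈ range i, (1 - (r : ℝ) / k) / (1 - (r : ℝ) / q₁)
        = ∏ r ∈ range i, (((k:ℝ) - r) / ((q₁:ℝ) - r)) := by
      rw [show ((k:ℝ)/q₁)^i = ∏ _r ∈ range i, ((k:ℝ)/q₁) by rw [prod_const, card_range],
        ← prod_mul_distrib]
      refine prod_congr rfl fun r hr => ?_
      have hri : r < i := mem_range.1 hr
      have hrk : (r:ℝ) < k := by exact_mod_cast (by omega : r < k)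
      have hrq : (r:ℝ) < q₁ := hrk.trans hkqR
      have h1 : (1 : ℝ) - r / q₁ ≠ 0 := by
        have : (r:ℝ)/q₁ < 1 := (div_lt_one hqR).2 hrq
        linarith
      have h2 : (q₁:ℝ) - r ≠ 0 := by linarith
      field_simp
    rw [h1, prod_div_distrib]
    have hcast : ∀ m : ℕ, i ≤ m → ∏ r ∈ range i, ((m:ℝ) - r) = (m.descFactorial i : ℝ) := by
      intro m hm
      rw [Nat.descFactorial_eq_prod_range, Nat.cast_prod]
      refine prod_congr rfl fun r hr => ?_
      have : r ≤ m := le_trans (le_of_lt (mem_range.1 hr)) hm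
      rw [Nat.cast_sub this]
    rw [hcast k hik, hcast q₁ (by omega)]
    rw [Nat.descFactorial_eq_factorial_mul_choose, Nat.descFactorial_eq_factorial_mul_choose]
    push_cast
    have hfne : (Nat.factorial i : ℝ) ≠ 0 := by exact_mod_cast Nat.factorial_ne_zero i
    have hc : (q₁.choose i : ℝ) ≠ 0 := by
      have : 0 < q₁.choose i := Nat.choose_pos (by omega)
      exact_mod_cast this.ne'
    field_simp
  constructor
  · rw [mul_sub, mul_one, key]
  · rw [show ((k : ℝ) / q₁) ^ i - (k.choose i : ℝ) / (q₁.choose i : ℝ)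
        = ((k : ℝ) / q₁) ^ i * (1 - ∏ r ∈ range i, (1 - (r : ℝ) / k) / (1 - (r : ℝ) / q₁)) by
      rw [mul_sub, mul_one, key]]
    -- bounds on the factors
    set f : ℕ → ℝ := fun r => (1 - (r : ℝ) / k) / (1 - (r : ℝ) / q₁) with hf
    have hfacts : ∀ r ∈ range i, (0 ≤ f r ∧ f r ≤ 1) ∧ 1 - f r ≤ r / k := by
      intro r hr
      have hri : r < i := mem_range.1 hr
      have hrk : (r:ℝ) < k := by exact_mod_cast (by omega : r < k)
      have hrq : (r:ℝ) < q₁ := hrk.trans hkqR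
      have hd : (0:ℝ) < 1 - r / q₁ := by
        have : (r:ℝ)/q₁ < 1 := (div_lt_one hqR).2 hrq
        linarith
      have hn : (0:ℝ) ≤ 1 - r / k := by
        have : (r:ℝ)/k < 1 := (div_lt_one hkR).2 hrk
        linarith
      have hmono : (r:ℝ)/q₁ ≤ r/k := by
        apply div_le_div_of_nonneg_left (by positivity) hkR hkqR.le
      constructor
      · constructor
        · positivity
        · rw [div_le_one hd]; linarith
      · have h1 : 1 - (r:ℝ)/k ≤ f r := by
          rw [hf]
          rw [le_div_iff₀ hd]
          have hnn : 0 ≤ (1 - (r:ℝ)/k) * ((r:ℝ)/q₁) := mul_nonneg hn (by positivity)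
          nlinarith
        linarith
    have hprodle : 1 - ∏ r ∈ range i, f r ≤ ∑ r ∈ range i, (1 - f r) :=
      aux_one_sub_prod _ _ (fun j hj => ((hfacts j hj).1).1) (fun j hj => ((hfacts j hj).1).2)
    have hsumle : ∑ r ∈ range i, (1 - f r) ≤ ∑ r ∈ range i, (r:ℝ)/k :=
      sum_le_sum fun r hr => (hfacts r hr).2
    have hgauss : ∑ r ∈ range i, (r:ℝ) = (i:ℝ) * ((i:ℝ) - 1) / 2 := by
      have h := Finset.sum_range_id_mul_two i
      have := congrArg (Nat.cast : ℕ → ℝ) h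
      push_cast [Nat.cast_sub (by omega : 1 ≤ i)] at this
      linarith
    have hsum2 : ∑ r ∈ range i, (r:ℝ)/k = (i:ℝ) * ((i:ℝ) - 1) / (2 * k) := by
      rw [← sum_div, hgauss]; ring
    have hbound : 1 - ∏ r ∈ range i, f r ≤ (i:ℝ) * ((i:ℝ) - 1) / (2 * k) := by
      rw [← hsum2]; exact hprodle.trans hsumle
    have hpow : ((k : ℝ) / q₁) ^ i = ((k : ℝ) / q₁) ^ (i - 1) * ((k:ℝ)/q₁) := by
      rw [← pow_succ]
      congr 1
      omega
    calc ((k : ℝ) / q₁) ^ i * (1 - ∏ r ∈ range i, f r)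
        ≤ ((k : ℝ) / q₁) ^ i * ((i:ℝ) * ((i:ℝ) - 1) / (2 * k)) := by
          apply mul_le_mul_of_nonneg_left hbound (by positivity)
      _ = ((k : ℝ) / q₁) ^ (i - 1) * ((i : ℝ) * ((i : ℝ) - 1)) / (2 * q₁) := by
          rw [hpow]
          field_simp
end

section
/- Let p(x₁,x₂) = Σ_{i=0}^{n₁} Σ_{j=0}^{n₂} a_{i,j} x₁^i x₂^j, let λ = inf_{[0,1]²} p, and for q₁ ≥ n₁, q₂ ≥ n₂ let c^{(q₁,q₂)} be the minimum of the Bernstein coefficients c_{k,l}^{(q₁,q₂)} = Σ_{i,j} a_{i,j} binomial(k,i) binomial(l,j) / (binomial(q₁,i) binomial(q₂,j)). Then λ − c^{(q₁,q₂)} ≤ γ₁(q₁−1)/q₁² + γ₂(q₂−1)/q₂², where γ₁ = (1/2) Σ_{i,j} |a_{i,j}| i(i−1) and γ₂ = (1/2) Σ_{i,j} |a_{i,j}| j(j−1). -/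
open Finset

set_option maxHeartbeats 1000000


lemma aux_u (i : ℕ) (u : ℝ) (hu : 0 ≤ u) : u ^ i * (1 + i * (1 - u)) ≤ 1 := by
  rcases Nat.eq_zero_or_pos i with hi | hi
  · simp [hi]
  rcases eq_or_lt_of_le hu with h0 | h0
  · rw [← h0, zero_pow (by omega)]; norm_num
  by_cases hs : 1 + (i : ℝ) * (1 - u) ≤ 0
  · have : u ^ i * (1 + (i:ℝ) * (1 - u)) ≤ 0 :=
      mul_nonpos_of_nonneg_of_nonpos (pow_nonneg hu i) hs
    linarith
  · push_neg at hs
    have hiu : 0 < 1/u := by positivity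
    have hber : 1 + (i:ℝ) * (1/u - 1) ≤ (1/u) ^ i := by
      have h2 : (-2 : ℝ) ≤ 1/u - 1 := by nlinarith
      have := one_add_mul_le_pow h2 i
      simpa using this
    have hcmp : 1 + (i:ℝ) * (1 - u) ≤ 1 + (i:ℝ) * (1/u - 1) := by
      have key : (1 - u) ≤ (1/u - 1) := by
        rw [div_sub' h0.ne', le_div_iff₀ h0]
        nlinarith [sq_nonneg (1 - u)]
      have : (0:ℝ) ≤ i := Nat.cast_nonneg i
      nlinarith
    calc u ^ i * (1 + (i:ℝ) * (1 - u)) ≤ u ^ i * (1/u) ^ i :=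
          mul_le_mul_of_nonneg_left (hcmp.trans hber) (pow_nonneg hu i)
      _ = 1 := by rw [← mul_pow, mul_one_div, div_self h0.ne', one_pow]

lemma aux_L1 (i : ℕ) (hi : 1 ≤ i) (x : ℝ) (hx0 : 0 ≤ x) :
    x ^ i * (1 - x) * ((i:ℝ) + 1) ^ (i + 1) ≤ (i:ℝ) ^ i := by
  have hipos : (0:ℝ) < i := by exact_mod_cast hi
  set u : ℝ := x * ((i:ℝ) + 1) / i with hu_def
  have hu : 0 ≤ u := by positivity
  have hiu2 : (i:ℝ) * u = x * ((i:ℝ) + 1) := by rw [hu_def]; field_simp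
  have hui : u ^ i * (i:ℝ) ^ i = x ^ i * ((i:ℝ) + 1) ^ i := by
    rw [hu_def, div_pow, mul_pow, div_mul_cancel₀]
    positivity
  have h2 : (1 - x) * ((i:ℝ) + 1) = 1 + i * (1 - u) := by linear_combination hiu2
  have h := aux_u i u hu
  calc x ^ i * (1 - x) * ((i:ℝ) + 1) ^ (i + 1)
      = (x ^ i * ((i:ℝ) + 1) ^ i) * ((1 - x) * ((i:ℝ) + 1)) := by rw [pow_succ]; ring
    _ = (i:ℝ) ^ i * (u ^ i * (1 + i * (1 - u))) := by rw [← hui, h2]; ring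
    _ ≤ (i:ℝ) ^ i * 1 := mul_le_mul_of_nonneg_left h (by positivity)
    _ = (i:ℝ) ^ i := mul_one _

lemma aux_two (i : ℕ) (hi : 1 ≤ i) : 2 * (i:ℝ) ^ i ≤ ((i:ℝ) + 1) ^ i := by
  have hipos : (0:ℝ) < i := by exact_mod_cast hi
  have hia : (0:ℝ) ≤ 1/i := by positivity
  have hber := one_add_mul_le_pow (a := 1/(i:ℝ)) (by linarith) i
  have h1 : 1 + (i:ℝ) * (1/i) = 2 := by rw [mul_one_div, div_self hipos.ne']; norm_num
  have h3 : ((1:ℝ) + 1/i) * i = (i:ℝ) + 1 := by field_simp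
  calc 2 * (i:ℝ) ^ i = (1 + (i:ℝ) * (1/i)) * (i:ℝ) ^ i := by rw [h1]
    _ ≤ (1 + 1/(i:ℝ)) ^ i * (i:ℝ) ^ i := mul_le_mul_of_nonneg_right hber (by positivity)
    _ = ((i:ℝ) + 1) ^ i := by rw [← mul_pow, h3]

lemma aux_L2 (i q : ℕ) (h1 : 1 ≤ i) (h2 : i < q) :
    (q:ℝ) ^ 2 ≤ 2 * ((i:ℝ) + 1) * ((q:ℝ) - 1) * ((q:ℝ) - i) := by
  have hi : (1:ℝ) ≤ i := by exact_mod_cast h1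
  have hiq : (i:ℝ) + 1 ≤ q := by exact_mod_cast h2
  nlinarith [mul_nonneg (sub_nonneg.2 hi) (sub_nonneg.2 hiq)]

-- the key analytic fact: q² x^i (1-x) ≤ (q-1)(q-i)
lemma aux_C (i q : ℕ) (h1 : 1 ≤ i) (h2 : i < q) (x : ℝ) (hx0 : 0 ≤ x) (hx1 : x ≤ 1) :
    (q:ℝ) ^ 2 * (x ^ i * (1 - x)) ≤ ((q:ℝ) - 1) * ((q:ℝ) - i) := by
  have hi : (1:ℝ) ≤ i := by exact_mod_cast h1
  have hiq : (i:ℝ) + 1 ≤ q := by exact_mod_cast h2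
  have hPpos : (0:ℝ) < ((i:ℝ) + 1) ^ (i + 1) := by positivity
  rw [← mul_le_mul_iff_of_pos_right hPpos]
  have hnn : (0:ℝ) ≤ ((i:ℝ) + 1) * ((q:ℝ) - 1) * ((q:ℝ) - i) := mul_nonneg (mul_nonneg (by linarith) (by linarith)) (by linarith)
  calc (q:ℝ) ^ 2 * (x ^ i * (1 - x)) * ((i:ℝ) + 1) ^ (i + 1)
      = (q:ℝ) ^ 2 * (x ^ i * (1 - x) * ((i:ℝ) + 1) ^ (i + 1)) := by ring
    _ ≤ (q:ℝ) ^ 2 * (i:ℝ) ^ i := mul_le_mul_of_nonneg_left (aux_L1 i h1 x hx0) (by positivity)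
    _ ≤ (2 * ((i:ℝ) + 1) * ((q:ℝ) - 1) * ((q:ℝ) - i)) * (i:ℝ) ^ i :=
        mul_le_mul_of_nonneg_right (aux_L2 i q h1 h2) (by positivity)
    _ = (((i:ℝ) + 1) * ((q:ℝ) - 1) * ((q:ℝ) - i)) * (2 * (i:ℝ) ^ i) := by ring
    _ ≤ (((i:ℝ) + 1) * ((q:ℝ) - 1) * ((q:ℝ) - i)) * ((i:ℝ) + 1) ^ i :=
        mul_le_mul_of_nonneg_left (aux_two i h1) hnn
    _ = ((q:ℝ) - 1) * ((q:ℝ) - i) * ((i:ℝ) + 1) ^ (i + 1) := by rw [pow_succ]; ring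

lemma aux_key (q k i : ℕ) (hk : k ≤ q) (hi : i ≤ q) :
    0 ≤ (k.choose i : ℝ) / (q.choose i : ℝ) ∧
    (k.choose i : ℝ) / (q.choose i : ℝ) ≤ ((k:ℝ)/(q:ℝ)) ^ i ∧
    ((k:ℝ)/(q:ℝ)) ^ i - (k.choose i : ℝ) / (q.choose i : ℝ) ≤
      ((q:ℝ) - 1) / (q:ℝ) ^ 2 * (∑ s ∈ range i, (s:ℝ)) := by
  rcases Nat.eq_zero_or_pos q with hq | hq
  · subst hq
    interval_cases k <;> interval_cases i <;> norm_num
  have hq0 : (0:ℝ) < q := by exact_mod_cast hq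
  set x : ℝ := (k:ℝ)/(q:ℝ) with hxdef
  have hx0 : 0 ≤ x := by positivity
  have hxq : x * (q:ℝ) = (k:ℝ) := div_mul_cancel₀ _ hq0.ne'
  have hkq : (k:ℝ) ≤ (q:ℝ) := by exact_mod_cast hk
  have hx1 : x ≤ 1 := by rw [hxdef, div_le_one hq0]; exact hkq
  set f : ℕ → ℝ := fun s => ((k - s : ℕ) : ℝ) / ((q:ℝ) - (s:ℝ)) with hfdef
  have main : ∀ m, m ≤ q →
      0 ≤ ∏ s ∈ range m, f s ∧ (∏ s ∈ range m, f s) ≤ x ^ m ∧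
      x ^ m - ∏ s ∈ range m, f s ≤ ((q:ℝ) - 1) / (q:ℝ) ^ 2 * (∑ s ∈ range m, (s:ℝ)) := by
    intro m
    induction m with
    | zero => intro _; simp
    | succ n ih =>
      intro hn
      obtain ⟨h0, h1, h2⟩ := ih (by omega)
      have hnq : n < q := by omega
      have hnr : (n:ℝ) < (q:ℝ) := by exact_mod_cast hnq
      have hfq : (0:ℝ) < (q:ℝ) - (n:ℝ) := by linarith
      have hf0 : 0 ≤ f n := div_nonneg (Nat.cast_nonneg _) hfq.le
      have hfc : f n * ((q:ℝ) - (n:ℝ)) = ((k - n : ℕ) : ℝ) := div_mul_cancel₀ _ hfq.ne'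
      have hfx : f n ≤ x := by
        by_cases hkn : n ≤ k
        · have hc : ((k - n : ℕ) : ℝ) = (k:ℝ) - (n:ℝ) := by
            push_cast [hkn]; ring
          rw [hfdef]
          simp only []
          rw [hc, div_le_iff₀ hfq]
          have hn0 : (0:ℝ) ≤ (n:ℝ) := Nat.cast_nonneg n
          nlinarith [hxq, hx1]
        · have hc : ((k - n : ℕ) : ℝ) = 0 := by
            have : k - n = 0 := by omega
            rw [this]; norm_num
          rw [hfdef]
          simp only []
          rw [hc, zero_div]
          exact hx0
      have hup : x - f n ≤ (n:ℝ) * (1 - x) / ((q:ℝ) - (n:ℝ)) := by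
        rw [sub_le_iff_le_add, div_add' _ _ _ hfq.ne']
        rw [le_div_iff₀ hfq, hfc]
        by_cases hkn : n ≤ k
        · have hc : ((k - n : ℕ) : ℝ) = (k:ℝ) - (n:ℝ) := by push_cast [hkn]; ring
          rw [hc]
          nlinarith [hxq]
        · have hc : ((k - n : ℕ) : ℝ) = 0 := by
            have : k - n = 0 := by omega
            rw [this]; norm_num
          rw [hc]
          have hkn' : (k:ℝ) ≤ (n:ℝ) := by exact_mod_cast (by omega : k ≤ n)
          have hxn : 0 ≤ x * (n:ℝ) := mul_nonneg hx0 (Nat.cast_nonneg n)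
          nlinarith [hxq]
      have hxf : 0 ≤ x - f n := sub_nonneg.2 hfx
      have hstep : x ^ n * (x - f n) ≤ ((q:ℝ) - 1) / (q:ℝ) ^ 2 * (n:ℝ) := by
        rcases Nat.eq_zero_or_pos n with h | h
        · subst h
          have : f 0 = x := by
            rw [hfdef]; simp [hxdef]
          rw [this]
          simp
        · have hC := aux_C n q h hnq x hx0 hx1
          have step1 : x ^ n * (x - f n) ≤ x ^ n * ((n:ℝ) * (1 - x) / ((q:ℝ) - (n:ℝ))) :=
            mul_le_mul_of_nonneg_left hup (pow_nonneg hx0 n)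
          have step2 : x ^ n * ((n:ℝ) * (1 - x) / ((q:ℝ) - (n:ℝ))) ≤ ((q:ℝ) - 1) / (q:ℝ) ^ 2 * (n:ℝ) := by
            rw [show x ^ n * ((n:ℝ) * (1 - x) / ((q:ℝ) - (n:ℝ))) =
                ((n:ℝ) * (x ^ n * (1 - x))) / ((q:ℝ) - (n:ℝ)) by ring,
              show ((q:ℝ) - 1) / (q:ℝ) ^ 2 * (n:ℝ) = (((q:ℝ) - 1) * (n:ℝ)) / (q:ℝ) ^ 2 by ring,
              div_le_div_iff₀ hfq (by positivity)]
            have hn0 : (0:ℝ) ≤ (n:ℝ) := Nat.cast_nonneg n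
            nlinarith [hC]
          exact step1.trans step2
      refine ⟨?_, ?_, ?_⟩
      · rw [prod_range_succ]; exact mul_nonneg h0 hf0
      · rw [prod_range_succ, pow_succ]
        exact mul_le_mul h1 hfx hf0 (pow_nonneg hx0 n)
      · rw [prod_range_succ, sum_range_succ, pow_succ]
        have hfle1 : f n ≤ 1 := hfx.trans hx1
        have hmm : f n * (x ^ n - ∏ s ∈ range n, f s) ≤ x ^ n - ∏ s ∈ range n, f s :=
          mul_le_of_le_one_left (sub_nonneg.2 h1) hfle1
        nlinarith [hstep, h2, hmm]
  obtain ⟨h0, h1, h2⟩ := main i hi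
  have hprod : (∏ s ∈ range i, f s) = (k.choose i : ℝ) / (q.choose i : ℝ) := by
    have hA : (∏ s ∈ range i, ((k - s : ℕ) : ℝ)) = (k.descFactorial i : ℝ) := by
      rw [Nat.descFactorial_eq_prod_range, Nat.cast_prod]
    have hB : (∏ s ∈ range i, ((q:ℝ) - (s:ℝ))) = (q.descFactorial i : ℝ) := by
      rw [Nat.descFactorial_eq_prod_range, Nat.cast_prod]
      refine prod_congr rfl fun s hs => ?_
      have : s ≤ q := le_of_lt (lt_of_lt_of_le (mem_range.1 hs) hi)
      push_cast [this]
      ring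
    rw [hfdef]
    rw [prod_div_distrib, hA, hB, Nat.descFactorial_eq_factorial_mul_choose,
      Nat.descFactorial_eq_factorial_mul_choose]
    push_cast
    rw [mul_div_mul_left]
    exact_mod_cast Nat.factorial_ne_zero i
  rw [← hprod]
  exact ⟨h0, h1, h2⟩

lemma aux_sumid (i : ℕ) : (∑ s ∈ range i, (s:ℝ)) = (i:ℝ) * ((i:ℝ) - 1) / 2 := by
  rcases Nat.eq_zero_or_pos i with h | h
  · simp [h]
  have := Finset.sum_range_id_mul_two i
  have hc : ((∑ s ∈ range i, s : ℕ) : ℝ) * 2 = (i:ℝ) * ((i:ℝ) - 1) := by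
    rw [← Nat.cast_ofNat, ← Nat.cast_mul, this]
    have h1 : (1:ℕ) ≤ i := h
    push_cast [h1]
    ring
  push_cast at hc ⊢
  linarith

lemma aux_key' (q k i : ℕ) (hk : k ≤ q) (hi : i ≤ q) :
    0 ≤ (k.choose i : ℝ) / (q.choose i : ℝ) ∧
    (k.choose i : ℝ) / (q.choose i : ℝ) ≤ ((k:ℝ)/(q:ℝ)) ^ i ∧
    ((k:ℝ)/(q:ℝ)) ^ i - (k.choose i : ℝ) / (q.choose i : ℝ) ≤
      (i:ℝ) * ((i:ℝ) - 1) / 2 * (((q:ℝ) - 1) / (q:ℝ) ^ 2) := by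
  obtain ⟨h0, h1, h2⟩ := aux_key q k i hk hi
  rw [aux_sumid] at h2
  exact ⟨h0, h1, by linarith [h2]⟩

lemma aux_Dnonneg (q i : ℕ) : 0 ≤ (i:ℝ) * ((i:ℝ) - 1) / 2 * (((q:ℝ) - 1) / (q:ℝ) ^ 2) := by
  have h1 : 0 ≤ (i:ℝ) * ((i:ℝ) - 1) / 2 := by
    rcases Nat.eq_zero_or_pos i with h | h
    · simp [h]
    have : (1:ℝ) ≤ i := by exact_mod_cast h
    nlinarith
  have h2 : 0 ≤ ((q:ℝ) - 1) / (q:ℝ) ^ 2 := by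
    rcases Nat.eq_zero_or_pos q with h | h
    · simp [h]
    have : (1:ℝ) ≤ q := by exact_mod_cast h
    exact div_nonneg (by linarith) (by positivity)
  positivity

lemma aux_mem01 (k q : ℕ) (h : k ≤ q) : (k:ℝ)/(q:ℝ) ∈ Set.Icc (0:ℝ) 1 := by
  constructor
  · positivity
  · rcases Nat.eq_zero_or_pos q with hq | hq
    · have : k = 0 := by omega
      simp [this, hq]
    · rw [div_le_one (by exact_mod_cast hq)]
      exact_mod_cast h

theorem stmt_13 (n₁ n₂ q₁ q₂ : ℕ) (hq₁ : n₁ ≤ q₁) (hq₂ : n₂ ≤ q₂) (a : ℕ → ℕ → ℝ) :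
    sInf {y : ℝ | ∃ x₁ ∈ Set.Icc (0 : ℝ) 1, ∃ x₂ ∈ Set.Icc (0 : ℝ) 1,
        y = ∑ i ∈ range (n₁ + 1), ∑ j ∈ range (n₂ + 1), a i j * x₁ ^ i * x₂ ^ j} -
      ((range (q₁ + 1) ×ˢ range (q₂ + 1)).inf' ⟨(0, 0), by simp⟩ fun kl =>
        ∑ i ∈ range (n₁ + 1), ∑ j ∈ range (n₂ + 1),
          a i j * ((kl.1.choose i : ℝ) * (kl.2.choose j : ℝ) /
            ((q₁.choose i : ℝ) * (q₂.choose j : ℝ)))) ≤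
    ((1 / 2) * ∑ i ∈ range (n₁ + 1), ∑ j ∈ range (n₂ + 1), |a i j| * (i : ℝ) * ((i : ℝ) - 1)) *
        (((q₁ : ℝ) - 1) / (q₁ : ℝ) ^ 2) +
      ((1 / 2) * ∑ i ∈ range (n₁ + 1), ∑ j ∈ range (n₂ + 1), |a i j| * (j : ℝ) * ((j : ℝ) - 1)) *
        (((q₂ : ℝ) - 1) / (q₂ : ℝ) ^ 2) := by
  obtain ⟨kl, hmem, heq⟩ := Finset.exists_mem_eq_inf'
    (⟨(0, 0), by simp⟩ : ((range (q₁ + 1) ×ˢ range (q₂ + 1)) : Finset (ℕ × ℕ)).Nonempty)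
    (fun kl : ℕ × ℕ =>
      ∑ i ∈ range (n₁ + 1), ∑ j ∈ range (n₂ + 1),
        a i j * ((kl.1.choose i : ℝ) * (kl.2.choose j : ℝ) /
          ((q₁.choose i : ℝ) * (q₂.choose j : ℝ))))
  rw [heq]
  rw [Finset.mem_product, Finset.mem_range, Finset.mem_range] at hmem
  have hk : kl.1 ≤ q₁ := by omega
  have hl : kl.2 ≤ q₂ := by omega
  set x₁ : ℝ := (kl.1 : ℝ) / (q₁ : ℝ) with hx1def
  set x₂ : ℝ := (kl.2 : ℝ) / (q₂ : ℝ) with hx2def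
  have hx1 : x₁ ∈ Set.Icc (0:ℝ) 1 := aux_mem01 _ _ hk
  have hx2 : x₂ ∈ Set.Icc (0:ℝ) 1 := aux_mem01 _ _ hl
  have hPmem : (∑ i ∈ range (n₁ + 1), ∑ j ∈ range (n₂ + 1), a i j * x₁ ^ i * x₂ ^ j) ∈
      {y : ℝ | ∃ u ∈ Set.Icc (0 : ℝ) 1, ∃ v ∈ Set.Icc (0 : ℝ) 1,
        y = ∑ i ∈ range (n₁ + 1), ∑ j ∈ range (n₂ + 1), a i j * u ^ i * v ^ j} :=
    ⟨x₁, hx1, x₂, hx2, rfl⟩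
  have hbdd : BddBelow {y : ℝ | ∃ u ∈ Set.Icc (0 : ℝ) 1, ∃ v ∈ Set.Icc (0 : ℝ) 1,
      y = ∑ i ∈ range (n₁ + 1), ∑ j ∈ range (n₂ + 1), a i j * u ^ i * v ^ j} := by
    refine ⟨-∑ i ∈ range (n₁ + 1), ∑ j ∈ range (n₂ + 1), |a i j|, ?_⟩
    rintro y ⟨u, hu, v, hv, rfl⟩
    have h : ∀ i ∈ range (n₁ + 1), ∀ j ∈ range (n₂ + 1), -|a i j| ≤ a i j * u ^ i * v ^ j := by
      intro i _ j _
      have h1 : |a i j * u ^ i * v ^ j| ≤ |a i j| := by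
        rw [abs_mul, abs_mul]
        have hu1 : |u ^ i| ≤ 1 := by
          rw [abs_pow]; exact pow_le_one₀ (abs_nonneg u) (abs_le.2 ⟨by linarith [hu.1], hu.2⟩)
        have hv1 : |v ^ j| ≤ 1 := by
          rw [abs_pow]; exact pow_le_one₀ (abs_nonneg v) (abs_le.2 ⟨by linarith [hv.1], hv.2⟩)
        calc |a i j| * |u ^ i| * |v ^ j| ≤ |a i j| * 1 * 1 := by
              apply mul_le_mul (mul_le_mul le_rfl hu1 (abs_nonneg _) (abs_nonneg _)) hv1
                (abs_nonneg _) (by positivity)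
          _ = |a i j| := by ring
      linarith [neg_abs_le (a i j * u ^ i * v ^ j)]
    calc -∑ i ∈ range (n₁ + 1), ∑ j ∈ range (n₂ + 1), |a i j|
        = ∑ i ∈ range (n₁ + 1), ∑ j ∈ range (n₂ + 1), -|a i j| := by
          simp [Finset.sum_neg_distrib]
      _ ≤ ∑ i ∈ range (n₁ + 1), ∑ j ∈ range (n₂ + 1), a i j * u ^ i * v ^ j :=
          Finset.sum_le_sum fun i hi => Finset.sum_le_sum fun j hj => h i hi j hj
  have h1 := csInf_le hbdd hPmem
  have hmain : (∑ i ∈ range (n₁ + 1), ∑ j ∈ range (n₂ + 1), a i j * x₁ ^ i * x₂ ^ j) -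
      (∑ i ∈ range (n₁ + 1), ∑ j ∈ range (n₂ + 1),
        a i j * ((kl.1.choose i : ℝ) * (kl.2.choose j : ℝ) /
          ((q₁.choose i : ℝ) * (q₂.choose j : ℝ)))) ≤
      ((1 / 2) * ∑ i ∈ range (n₁ + 1), ∑ j ∈ range (n₂ + 1), |a i j| * (i : ℝ) * ((i : ℝ) - 1)) *
          (((q₁ : ℝ) - 1) / (q₁ : ℝ) ^ 2) +
        ((1 / 2) * ∑ i ∈ range (n₁ + 1), ∑ j ∈ range (n₂ + 1), |a i j| * (j : ℝ) * ((j : ℝ) - 1)) *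
          (((q₂ : ℝ) - 1) / (q₂ : ℝ) ^ 2) := by
    rw [← Finset.sum_sub_distrib]
    simp only [← Finset.sum_sub_distrib]
    calc ∑ i ∈ range (n₁ + 1), ∑ j ∈ range (n₂ + 1),
          (a i j * x₁ ^ i * x₂ ^ j -
            a i j * ((kl.1.choose i : ℝ) * (kl.2.choose j : ℝ) /
              ((q₁.choose i : ℝ) * (q₂.choose j : ℝ))))
        ≤ ∑ i ∈ range (n₁ + 1), ∑ j ∈ range (n₂ + 1),
            |a i j| * ((i:ℝ) * ((i:ℝ) - 1) / 2 * (((q₁:ℝ) - 1) / (q₁:ℝ) ^ 2) +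
              (j:ℝ) * ((j:ℝ) - 1) / 2 * (((q₂:ℝ) - 1) / (q₂:ℝ) ^ 2)) := by
          refine Finset.sum_le_sum fun i hi => Finset.sum_le_sum fun j hj => ?_
          have hiq : i ≤ q₁ := le_trans (Nat.lt_succ_iff.1 (mem_range.1 hi)) hq₁
          have hjq : j ≤ q₂ := le_trans (Nat.lt_succ_iff.1 (mem_range.1 hj)) hq₂
          obtain ⟨hr0, hr1, hr2⟩ := aux_key' q₁ kl.1 i hk hiq
          obtain ⟨hs0, hs1, hs2⟩ := aux_key' q₂ kl.2 j hl hjq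
          have hD1 := aux_Dnonneg q₁ i
          have hD2 := aux_Dnonneg q₂ j
          have hX1 : x₁ ^ i ≤ 1 := pow_le_one₀ hx1.1 hx1.2
          have hY1 : x₂ ^ j ≤ 1 := pow_le_one₀ hx2.1 hx2.2
          have hX0 : 0 ≤ x₁ ^ i := pow_nonneg hx1.1 i
          have hY0 : 0 ≤ x₂ ^ j := pow_nonneg hx2.1 j
          rw [mul_div_mul_comm]
          set R₁ : ℝ := (kl.1.choose i : ℝ) / (q₁.choose i : ℝ)
          set R₂ : ℝ := (kl.2.choose j : ℝ) / (q₂.choose j : ℝ)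
          set D₁ : ℝ := (i:ℝ) * ((i:ℝ) - 1) / 2 * (((q₁:ℝ) - 1) / (q₁:ℝ) ^ 2)
          set D₂ : ℝ := (j:ℝ) * ((j:ℝ) - 1) / 2 * (((q₂:ℝ) - 1) / (q₂:ℝ) ^ 2)
          have hAe : x₁ ^ i * x₂ ^ j - R₁ * x₂ ^ j ≤ D₁ := by nlinarith
          have hBe : R₁ * x₂ ^ j - R₁ * R₂ ≤ D₂ := by nlinarith [hr1.trans hX1]
          have hge : 0 ≤ x₁ ^ i * x₂ ^ j - R₁ * R₂ := by nlinarith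
          have hrw : a i j * x₁ ^ i * x₂ ^ j - a i j * (R₁ * R₂) =
              a i j * (x₁ ^ i * x₂ ^ j - R₁ * R₂) := by ring
          rw [hrw]
          calc a i j * (x₁ ^ i * x₂ ^ j - R₁ * R₂)
              ≤ |a i j| * (x₁ ^ i * x₂ ^ j - R₁ * R₂) :=
                mul_le_mul_of_nonneg_right (le_abs_self _) hge
            _ ≤ |a i j| * (D₁ + D₂) :=
                mul_le_mul_of_nonneg_left (by linarith) (abs_nonneg _)
      _ = ((1 / 2) * ∑ i ∈ range (n₁ + 1), ∑ j ∈ range (n₂ + 1),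
              |a i j| * (i : ℝ) * ((i : ℝ) - 1)) * (((q₁ : ℝ) - 1) / (q₁ : ℝ) ^ 2) +
          ((1 / 2) * ∑ i ∈ range (n₁ + 1), ∑ j ∈ range (n₂ + 1),
              |a i j| * (j : ℝ) * ((j : ℝ) - 1)) * (((q₂ : ℝ) - 1) / (q₂ : ℝ) ^ 2) := by
          simp only [Finset.sum_mul, Finset.mul_sum, ← Finset.sum_add_distrib]
          refine Finset.sum_congr rfl fun i _ => ?_
          refine Finset.sum_congr rfl fun j _ => ?_
          ring
  linarith
end

section
/- Let p be a bivariate polynomial of bidegree at most (n₁,n₂), strictly positive on [0,1]², with minimum λ > 0 there, and let γ₁, γ₂ be as in the Bernstein coefficient bound. Then for q₁ ≥ n₁, q₂ ≥ n₂ large enough that γ₁(q₁−1)/q₁² + γ₂(q₂−1)/q₂² < λ, all Bernstein coefficients c_{k,l}^{(q₁,q₂)} of p of bidegree (q₁,q₂) are strictly positive. -/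
open Finset

set_option maxHeartbeats 800000 in
lemma ratio_eq (q k : ℕ) (i : ℕ) (hi : i ≤ q) :
    (k.choose i : ℝ) / (q.choose i : ℝ) =
      ∏ r ∈ range i, (((k:ℝ) - r) / ((q:ℝ) - r)) := by
  induction i with
  | zero => simp
  | succ i ih =>
    have hiq : i < q := hi
    have ihe := ih hiq.le
    have hqi : (0:ℝ) < (q:ℝ) - i := by
      have : (i:ℝ) < q := by exact_mod_cast hiq
      linarith
    have hqc : (q.choose i : ℝ) ≠ 0 := by
      exact_mod_cast Nat.choose_pos hiq.le |>.ne'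
    have hqc1 : (q.choose (i+1) : ℝ) ≠ 0 := by
      exact_mod_cast Nat.choose_pos hi |>.ne'
    have hrecq : (q.choose (i+1) : ℝ) * (i+1) = q.choose i * ((q:ℝ) - i) := by
      have h := Nat.choose_succ_right_eq q i
      have : ((q.choose (i+1) * (i+1) : ℕ) : ℝ) = ((q.choose i * (q - i) : ℕ) : ℝ) := by
        exact congrArg Nat.cast h
      push_cast [Nat.cast_sub hiq.le] at this
      linarith
    rw [prod_range_succ, ← ihe]
    rcases lt_or_ge i k with hik | hik
    · have hrec : (k.choose (i+1) : ℝ) * (i+1) = k.choose i * ((k:ℝ) - i) := by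
        have h := Nat.choose_succ_right_eq k i
        have : ((k.choose (i+1) * (i+1) : ℕ) : ℝ) = ((k.choose i * (k - i) : ℕ) : ℝ) := by
          exact congrArg Nat.cast h
        push_cast [Nat.cast_sub hik.le] at this
        linarith
      have hi1 : ((i:ℝ)+1) ≠ 0 := by positivity
      field_simp
      nlinarith [hrecq, hrec, sq_nonneg ((q.choose i : ℝ))]
    · -- i ≥ k : LHS is 0, RHS is 0
      have : k.choose (i+1) = 0 := Nat.choose_eq_zero_of_lt (by omega)
      rw [this]
      rcases eq_or_lt_of_le hik with he | hlt
      · rw [← he]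
        simp
      · have : k.choose i = 0 := Nat.choose_eq_zero_of_lt hlt
        rw [this]
        simp


set_option maxHeartbeats 800000 in
lemma prod_bounds (q k : ℕ) (hk : k ≤ q) (i : ℕ) (hi : i ≤ q) :
    0 ≤ ((k:ℝ)/q)^i - ∏ r ∈ range i, (((k:ℝ) - r) / ((q:ℝ) - r)) ∧
    ((k:ℝ)/q)^i - ∏ r ∈ range i, (((k:ℝ) - r) / ((q:ℝ) - r)) ≤
      (i:ℝ)*((i:ℝ)-1)/2 * (((q:ℝ)-1)/(q:ℝ)^2) := by
  induction i with
  | zero => simp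
  | succ i ih =>
    have hiq : i < q := hi
    obtain ⟨ih1, ih2⟩ := ih hiq.le
    have hq0 : (0:ℝ) < q := by
      have : 0 < q := by omega
      exact_mod_cast this
    have hqi : (0:ℝ) < (q:ℝ) - i := by
      have : (i:ℝ) < q := by exact_mod_cast hiq
      linarith
    have hkq : (k:ℝ) ≤ q := by exact_mod_cast hk
    set x : ℝ := (k:ℝ)/q with hxdef
    set P : ℝ := ∏ r ∈ range i, (((k:ℝ) - r) / ((q:ℝ) - r)) with hPdef
    have hx0 : 0 ≤ x := by positivity
    have hx1 : x ≤ 1 := by rw [hxdef, div_le_one hq0]; exact hkq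
    have hP0 : 0 ≤ P := by
      rw [hPdef, ← ratio_eq q k i hiq.le]
      positivity
    have ht0 : 0 ≤ ((q:ℝ)-1)/(q:ℝ)^2 := by
      have : (1:ℝ) ≤ q := by exact_mod_cast Nat.one_le_iff_ne_zero.mpr (by omega)
      apply div_nonneg (by linarith) (by positivity)
    have hgap : x - ((k:ℝ)-i)/((q:ℝ)-i) = (i:ℝ)*((q:ℝ)-k)/((q:ℝ)*((q:ℝ)-i)) := by
      rw [hxdef]; field_simp; ring
    have hgap0 : 0 ≤ x - ((k:ℝ)-i)/((q:ℝ)-i) := by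
      rw [hgap]
      exact div_nonneg (mul_nonneg (by positivity) (by linarith)) (le_of_lt (mul_pos hq0 hqi))
    have hprodsucc : ∏ r ∈ range (i+1), (((k:ℝ) - r) / ((q:ℝ) - r))
        = P * (((k:ℝ)-i)/((q:ℝ)-i)) := by
      rw [prod_range_succ]
    have hiden : x^(i+1) - P * (((k:ℝ)-i)/((q:ℝ)-i))
        = x * (x^i - P) + P * (x - ((k:ℝ)-i)/((q:ℝ)-i)) := by ring
    -- key step bound
    have hkey : P * (x - ((k:ℝ)-i)/((q:ℝ)-i)) ≤ (i:ℝ) * (((q:ℝ)-1)/(q:ℝ)^2) := by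
      rcases Nat.lt_or_ge k i with hki | hki
      · -- k < i : P = 0
        have hP : P = 0 := by
          rw [hPdef]
          apply Finset.prod_eq_zero (Finset.mem_range.mpr hki)
          simp
        rw [hP, zero_mul]
        positivity
      · -- i ≤ k
        have hPx : P ≤ x^i := by
          rw [hPdef]
          calc ∏ r ∈ range i, (((k:ℝ) - r) / ((q:ℝ) - r)) ≤ ∏ r ∈ range i, x := by
                apply Finset.prod_le_prod
                · intro r hr
                  have hr' : r < i := Finset.mem_range.mp hr
                  have h1 : (r:ℝ) < k := by exact_mod_cast lt_of_lt_of_le hr' hki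
                  have h2 : (r:ℝ) < q := by linarith
                  exact div_nonneg (by linarith) (by linarith)
                · intro r hr
                  have hr' : r < i := Finset.mem_range.mp hr
                  have h1 : (r:ℝ) < k := by exact_mod_cast lt_of_lt_of_le hr' hki
                  have h2 : (r:ℝ) < q := by linarith
                  rw [hxdef, div_le_div_iff₀ (by linarith) hq0]
                  nlinarith [mul_nonneg (show (0:ℝ) ≤ r by positivity) (show (0:ℝ) ≤ (q:ℝ) - k by linarith)]
            _ = x^i := by rw [Finset.prod_const, Finset.card_range]
        by_cases hkq' : k = q
        · have : x - ((k:ℝ)-i)/((q:ℝ)-i) = 0 := by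
            rw [hgap, hkq']
            simp
          rw [this, mul_zero]
          positivity
        · have hk1 : (k:ℝ) + 1 ≤ q := by
            have : k + 1 ≤ q := by omega
            exact_mod_cast this
          rcases Nat.eq_zero_or_pos i with hi0 | hi0
          · subst hi0
            rw [hgap]
            push_cast
            simp
          · have hi1 : (1:ℝ) ≤ i := by exact_mod_cast hi0
            have hxi : x^i ≤ x := pow_le_of_le_one hx0 hx1 (by omega)
            have step1 : P * (x - ((k:ℝ)-i)/((q:ℝ)-i)) ≤ x * (x - ((k:ℝ)-i)/((q:ℝ)-i)) := by
              apply mul_le_mul_of_nonneg_right _ hgap0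
              linarith
            have hik' : (i:ℝ) ≤ k := by exact_mod_cast hki
            have hqi' : (q:ℝ) - i ≠ 0 := ne_of_gt hqi
            have hq0' : (q:ℝ) ≠ 0 := ne_of_gt hq0
            have hD : (0:ℝ) < (q:ℝ)^2*((q:ℝ)-i) := mul_pos (by positivity) hqi
            have e1 : (k:ℝ)/(q:ℝ) * ((i:ℝ)*((q:ℝ)-k)/((q:ℝ)*((q:ℝ)-i)))
                = (i:ℝ)*((k:ℝ)*((q:ℝ)-k)) / ((q:ℝ)^2*((q:ℝ)-i)) := by
              field_simp
            have e2 : (i:ℝ) * (((q:ℝ)-1)/(q:ℝ)^2)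
                = (i:ℝ)*(((q:ℝ)-1)*((q:ℝ)-i)) / ((q:ℝ)^2*((q:ℝ)-i)) := by
              field_simp
            have step2 : x * (x - ((k:ℝ)-i)/((q:ℝ)-i)) ≤ (i:ℝ) * (((q:ℝ)-1)/(q:ℝ)^2) := by
              rw [hgap, hxdef, e1, e2, div_le_div_iff₀ hD hD]
              have hkey2 : (k:ℝ)*((q:ℝ)-k) ≤ ((q:ℝ)-1)*((q:ℝ)-i) := by
                linarith [mul_nonneg (show (0:ℝ) ≤ (q:ℝ)-1-k by linarith)
                    (show (0:ℝ) ≤ (q:ℝ)-k by linarith),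
                  mul_nonneg (show (0:ℝ) ≤ (q:ℝ)-1 by linarith)
                    (show (0:ℝ) ≤ (k:ℝ)-i by linarith)]
              have := mul_le_mul_of_nonneg_right
                (mul_le_mul_of_nonneg_left hkey2 (show (0:ℝ) ≤ i by positivity)) hD.le
              linarith
            linarith
    constructor
    · rw [hprodsucc, hiden]
      have h0 : 0 ≤ x * (x^i - P) := mul_nonneg hx0 ih1
      have h0' : 0 ≤ P * (x - ((k:ℝ)-i)/((q:ℝ)-i)) := mul_nonneg hP0 hgap0
      linarith
    · rw [hprodsucc, hiden]
      have h1 : x * (x^i - P) ≤ x^i - P := by nlinarith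
      push_cast
      linarith


lemma mem01 (q k : ℕ) (h : k ≤ q) : (k:ℝ)/(q:ℝ) ∈ Set.Icc (0:ℝ) 1 := by
  rcases Nat.eq_zero_or_pos q with h0 | h0
  · have : k = 0 := by omega
    subst this; subst h0; norm_num
  · have hq : (0:ℝ) < q := by exact_mod_cast h0
    constructor
    · positivity
    · rw [div_le_one hq]; exact_mod_cast h

lemma choose_ratio_bounds (q k i : ℕ) (hk : k ≤ q) (hi : i ≤ q) :
    0 ≤ (k.choose i : ℝ)/(q.choose i : ℝ) ∧
    (k.choose i : ℝ)/(q.choose i : ℝ) ≤ ((k:ℝ)/q)^i ∧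
    ((k:ℝ)/q)^i - (k.choose i : ℝ)/(q.choose i : ℝ) ≤
      (i:ℝ)*((i:ℝ)-1)/2 * (((q:ℝ)-1)/(q:ℝ)^2) := by
  have h := prod_bounds q k hk i hi
  rw [← ratio_eq q k i hi] at h
  refine ⟨by positivity, by linarith [h.1], h.2⟩

lemma term_bound (a xi yj A B Di Dj : ℝ)
    (hA0 : 0 ≤ A) (hAx : A ≤ xi) (hdi : xi - A ≤ Di)
    (hB0 : 0 ≤ B) (hBy : B ≤ yj) (hdj : yj - B ≤ Dj)
    (hxi1 : xi ≤ 1) (hyj1 : yj ≤ 1) :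
    a * xi * yj - a * (A * B) ≤ |a| * (Di + Dj) := by
  have hz0 : 0 ≤ xi * yj - A * B := by nlinarith
  have hz1 : xi * yj - A * B ≤ Di + Dj := by nlinarith
  have ha : a ≤ |a| := le_abs_self a
  have ha0 : 0 ≤ |a| := abs_nonneg a
  nlinarith [mul_le_mul_of_nonneg_right ha hz0, mul_le_mul_of_nonneg_left hz1 ha0]


set_option maxHeartbeats 800000 in
theorem stmt_14 (n₁ n₂ q₁ q₂ : ℕ) (hq₁ : n₁ ≤ q₁) (hq₂ : n₂ ≤ q₂) (a : ℕ → ℕ → ℝ)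
    (lam : ℝ)
    (hlam : lam = sInf {y : ℝ | ∃ x₁ ∈ Set.Icc (0 : ℝ) 1, ∃ x₂ ∈ Set.Icc (0 : ℝ) 1,
        y = ∑ i ∈ range (n₁ + 1), ∑ j ∈ range (n₂ + 1), a i j * x₁ ^ i * x₂ ^ j})
    (hpos : ∀ x₁ ∈ Set.Icc (0 : ℝ) 1, ∀ x₂ ∈ Set.Icc (0 : ℝ) 1,
      0 < ∑ i ∈ range (n₁ + 1), ∑ j ∈ range (n₂ + 1), a i j * x₁ ^ i * x₂ ^ j)
    (hbound :
      ((1 / 2) * ∑ i ∈ range (n₁ + 1), ∑ j ∈ range (n₂ + 1), |a i j| * (i : ℝ) * ((i : ℝ) - 1)) *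
          (((q₁ : ℝ) - 1) / (q₁ : ℝ) ^ 2) +
        ((1 / 2) * ∑ i ∈ range (n₁ + 1), ∑ j ∈ range (n₂ + 1), |a i j| * (j : ℝ) * ((j : ℝ) - 1)) *
          (((q₂ : ℝ) - 1) / (q₂ : ℝ) ^ 2) < lam) :
    ∀ k ≤ q₁, ∀ l ≤ q₂,
      0 < ∑ i ∈ range (n₁ + 1), ∑ j ∈ range (n₂ + 1),
        a i j * ((k.choose i : ℝ) * (l.choose j : ℝ) /
          ((q₁.choose i : ℝ) * (q₂.choose j : ℝ))) := by
  intro k hk l hl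
  set x : ℝ := (k:ℝ)/(q₁:ℝ) with hxdef
  set y : ℝ := (l:ℝ)/(q₂:ℝ) with hydef
  have hx : x ∈ Set.Icc (0:ℝ) 1 := mem01 q₁ k hk
  have hy : y ∈ Set.Icc (0:ℝ) 1 := mem01 q₂ l hl
  set t₁ : ℝ := ((q₁:ℝ) - 1) / (q₁:ℝ)^2 with ht₁
  set t₂ : ℝ := ((q₂:ℝ) - 1) / (q₂:ℝ)^2 with ht₂
  -- lam is at most the value at (x, y)
  have hlamle : lam ≤ ∑ i ∈ range (n₁ + 1), ∑ j ∈ range (n₂ + 1), a i j * x ^ i * y ^ j := by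
    rw [hlam]
    apply csInf_le
    · refine ⟨0, ?_⟩
      rintro z ⟨x₁, hx₁, x₂, hx₂, rfl⟩
      exact (hpos x₁ hx₁ x₂ hx₂).le
    · exact ⟨x, hx, y, hy, rfl⟩
  -- the main estimate
  have hmain : ∑ i ∈ range (n₁ + 1), ∑ j ∈ range (n₂ + 1), a i j * x ^ i * y ^ j
      - ∑ i ∈ range (n₁ + 1), ∑ j ∈ range (n₂ + 1),
        a i j * ((k.choose i : ℝ) * (l.choose j : ℝ) /
          ((q₁.choose i : ℝ) * (q₂.choose j : ℝ)))
      ≤ ((1 / 2) * ∑ i ∈ range (n₁ + 1), ∑ j ∈ range (n₂ + 1),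
            |a i j| * (i : ℝ) * ((i : ℝ) - 1)) * t₁ +
        ((1 / 2) * ∑ i ∈ range (n₁ + 1), ∑ j ∈ range (n₂ + 1),
            |a i j| * (j : ℝ) * ((j : ℝ) - 1)) * t₂ := by
    rw [← Finset.sum_sub_distrib]
    simp only [← Finset.sum_sub_distrib]
    have step1 : ∀ i ∈ range (n₁ + 1), ∀ j ∈ range (n₂ + 1),
        a i j * x ^ i * y ^ j - a i j * ((k.choose i : ℝ) * (l.choose j : ℝ) /
          ((q₁.choose i : ℝ) * (q₂.choose j : ℝ)))
        ≤ |a i j| * ((i:ℝ)*((i:ℝ)-1)/2 * t₁ + (j:ℝ)*((j:ℝ)-1)/2 * t₂) := by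
      intro i hi j hj
      have hi' : i ≤ q₁ := le_trans (Nat.lt_succ_iff.mp (Finset.mem_range.mp hi)) hq₁
      have hj' : j ≤ q₂ := le_trans (Nat.lt_succ_iff.mp (Finset.mem_range.mp hj)) hq₂
      obtain ⟨hA0, hAx, hdi⟩ := choose_ratio_bounds q₁ k i hk hi'
      obtain ⟨hB0, hBy, hdj⟩ := choose_ratio_bounds q₂ l j hl hj'
      have hrw : (k.choose i : ℝ) * (l.choose j : ℝ) /
          ((q₁.choose i : ℝ) * (q₂.choose j : ℝ))
          = ((k.choose i : ℝ)/(q₁.choose i : ℝ)) * ((l.choose j : ℝ)/(q₂.choose j : ℝ)) :=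
        (div_mul_div_comm _ _ _ _).symm
      rw [hrw]
      exact term_bound (a i j) (x^i) (y^j) _ _ _ _ hA0 hAx hdi hB0 hBy hdj
        (pow_le_one₀ hx.1 hx.2) (pow_le_one₀ hy.1 hy.2)
    calc ∑ i ∈ range (n₁ + 1), ∑ j ∈ range (n₂ + 1),
          (a i j * x ^ i * y ^ j - a i j * ((k.choose i : ℝ) * (l.choose j : ℝ) /
            ((q₁.choose i : ℝ) * (q₂.choose j : ℝ))))
        ≤ ∑ i ∈ range (n₁ + 1), ∑ j ∈ range (n₂ + 1),
          |a i j| * ((i:ℝ)*((i:ℝ)-1)/2 * t₁ + (j:ℝ)*((j:ℝ)-1)/2 * t₂) := by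
          apply Finset.sum_le_sum
          intro i hi
          apply Finset.sum_le_sum
          intro j hj
          exact step1 i hi j hj
      _ = ((1 / 2) * ∑ i ∈ range (n₁ + 1), ∑ j ∈ range (n₂ + 1),
            |a i j| * (i : ℝ) * ((i : ℝ) - 1)) * t₁ +
          ((1 / 2) * ∑ i ∈ range (n₁ + 1), ∑ j ∈ range (n₂ + 1),
            |a i j| * (j : ℝ) * ((j : ℝ) - 1)) * t₂ := by
          simp only [Finset.sum_mul, Finset.mul_sum, ← Finset.sum_add_distrib]
          apply Finset.sum_congr rfl
          intro i _
          apply Finset.sum_congr rfl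
          intro j _
          ring
  linarith
end

section
/- The minimum Bernstein coefficient converges to the minimum of the polynomial: if p is a bivariate polynomial and c^{(q₁,q₂)} denotes the minimum Bernstein coefficient of p in bidegree (q₁,q₂), then c^{(q₁,q₂)} → min_{[0,1]²} p as q₁, q₂ → ∞. -/
open Finset Filter

lemma prod_abs_sub_le (i : ℕ) (f g : ℕ → ℝ)
    (hf0 : ∀ t ∈ range i, 0 ≤ f t) (hf1 : ∀ t ∈ range i, f t ≤ 1)
    (hg0 : ∀ t ∈ range i, 0 ≤ g t) (hg1 : ∀ t ∈ range i, g t ≤ 1) :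
    |(∏ t ∈ range i, f t) - ∏ t ∈ range i, g t| ≤ ∑ t ∈ range i, |f t - g t| := by
  induction i with
  | zero => simp
  | succ n ih =>
    have hsub : ∀ t ∈ range n, t ∈ range (n+1) := fun t ht =>
      mem_range.2 ((mem_range.1 ht).trans (Nat.lt_succ_self n))
    have ih' := ih (fun t ht => hf0 t (hsub t ht)) (fun t ht => hf1 t (hsub t ht))
      (fun t ht => hg0 t (hsub t ht)) (fun t ht => hg1 t (hsub t ht))
    rw [prod_range_succ, prod_range_succ, sum_range_succ]
    have hfn : n ∈ range (n+1) := self_mem_range_succ n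
    have key : (∏ t ∈ range n, f t) * f n - (∏ t ∈ range n, g t) * g n
        = ((∏ t ∈ range n, f t) - ∏ t ∈ range n, g t) * f n
          + (∏ t ∈ range n, g t) * (f n - g n) := by ring
    rw [key]
    have h1 : |((∏ t ∈ range n, f t) - ∏ t ∈ range n, g t) * f n|
        ≤ |(∏ t ∈ range n, f t) - ∏ t ∈ range n, g t| := by
      rw [abs_mul]
      have : |f n| ≤ 1 := abs_le.2 ⟨by linarith [hf0 n hfn], hf1 n hfn⟩
      nlinarith [abs_nonneg ((∏ t ∈ range n, f t) - ∏ t ∈ range n, g t)]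
    have h2 : |(∏ t ∈ range n, g t) * (f n - g n)| ≤ |f n - g n| := by
      rw [abs_mul]
      have hg : |∏ t ∈ range n, g t| ≤ 1 := by
        rw [abs_of_nonneg (prod_nonneg fun t ht => hg0 t (hsub t ht))]
        exact prod_le_one (fun t ht => hg0 t (hsub t ht)) (fun t ht => hg1 t (hsub t ht))
      nlinarith [abs_nonneg (f n - g n)]
    calc _ ≤ |((∏ t ∈ range n, f t) - ∏ t ∈ range n, g t) * f n|
            + |(∏ t ∈ range n, g t) * (f n - g n)| := abs_add_le _ _
      _ ≤ _ := by linarith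

lemma ratio_bound (n q k i : ℕ) (hq : n < q) (hk : k ≤ q) (hi : i ≤ n) :
    |(k.choose i : ℝ) / (q.choose i : ℝ) - ((k : ℝ) / q) ^ i| ≤ (n : ℝ) ^ 2 / ((q : ℝ) - n) := by
  have hqR : (0 : ℝ) < q := by
    have : 0 < q := Nat.pos_of_ne_zero (by omega)
    exact_mod_cast this
  have hnq : (n : ℝ) < q := by exact_mod_cast hq
  have hqn : (0 : ℝ) < (q : ℝ) - n := by linarith
  have hkq : (k : ℝ) ≤ q := by exact_mod_cast hk
  by_cases hki : k < i
  · have h1 : i ≠ 0 := by omega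
    have hn1 : (1 : ℝ) ≤ n := by exact_mod_cast Nat.one_le_iff_ne_zero.2 (by omega)
    have hkn : (k : ℝ) ≤ n := by exact_mod_cast le_trans (le_of_lt hki) hi
    rw [Nat.choose_eq_zero_of_lt hki]
    simp only [Nat.cast_zero, zero_div, zero_sub, abs_neg]
    have hx0 : (0 : ℝ) ≤ (k : ℝ) / q := by positivity
    have hx1 : (k : ℝ) / q ≤ 1 := by rw [div_le_one hqR]; exact hkq
    rw [abs_of_nonneg (pow_nonneg hx0 i)]
    calc ((k : ℝ) / q) ^ i ≤ (k : ℝ) / q := pow_le_of_le_one hx0 hx1 h1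
      _ ≤ (n : ℝ) / ((q : ℝ) - n) := by
          apply div_le_div₀ (by positivity) hkn hqn (by linarith)
      _ ≤ (n : ℝ) ^ 2 / ((q : ℝ) - n) := by
          gcongr
          nlinarith
  · push_neg at hki
    have hiq : i ≤ q := le_trans hi (le_of_lt hq)
    have hdesc : ∀ m : ℕ, i ≤ m → ((m.descFactorial i : ℝ)) = ∏ t ∈ range i, ((m : ℝ) - t) := by
      intro m hm
      rw [Nat.descFactorial_eq_prod_range, Nat.cast_prod]
      refine prod_congr rfl fun t ht => ?_
      have : t ≤ m := le_trans (le_of_lt (mem_range.1 ht)) hm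
      rw [Nat.cast_sub this]
    have hratio : (k.choose i : ℝ) / (q.choose i : ℝ)
        = ∏ t ∈ range i, (((k : ℝ) - t) / ((q : ℝ) - t)) := by
      have h2 : ((k.descFactorial i : ℝ)) / ((q.descFactorial i : ℝ))
          = (k.choose i : ℝ) / (q.choose i : ℝ) := by
        rw [Nat.descFactorial_eq_factorial_mul_choose, Nat.descFactorial_eq_factorial_mul_choose]
        push_cast
        rw [mul_div_mul_left _ _ (by positivity : (Nat.factorial i : ℝ) ≠ 0)]
      rw [← h2, hdesc k hki, hdesc q hiq, ← prod_div_distrib]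
    rw [hratio]
    have hpow : ((k : ℝ) / q) ^ i = ∏ _t ∈ range i, ((k : ℝ) / q) := by
      rw [prod_const, card_range]
    rw [hpow]
    have hb : ∀ t ∈ range i, |((k : ℝ) - t) / ((q : ℝ) - t) - (k : ℝ) / q|
        ≤ (n : ℝ) / ((q : ℝ) - n) := by
      intro t ht
      have htn : (t : ℝ) ≤ n := by
        exact_mod_cast le_trans (Nat.le_of_lt_succ (Nat.lt_succ_of_lt (mem_range.1 ht))) hi
      have htk : (t : ℝ) ≤ k := by
        exact_mod_cast le_trans (le_of_lt (mem_range.1 ht)) hki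
      have hqt : (0 : ℝ) < (q : ℝ) - t := by linarith
      have heq : (k : ℝ) / q - ((k : ℝ) - t) / ((q : ℝ) - t)
          = ((t : ℝ) * ((q : ℝ) - k)) / ((q : ℝ) * ((q : ℝ) - t)) := by
        field_simp
        ring
      rw [abs_sub_comm, heq, abs_of_nonneg (div_nonneg
        (mul_nonneg (Nat.cast_nonneg t) (by linarith)) (le_of_lt (mul_pos hqR hqt)))]
      rw [div_le_div_iff₀ (mul_pos hqR hqt) hqn]
      have ht0 : (0:ℝ) ≤ (t:ℝ) := by positivity
      have hk0 : (0:ℝ) ≤ (k:ℝ) := by positivity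
      have hn0 : (0:ℝ) ≤ (n:ℝ) := by positivity
      nlinarith [mul_nonneg (mul_nonneg (sub_nonneg.2 htn) (sub_nonneg.2 hkq)) hqn.le,
        mul_nonneg (mul_nonneg hn0 hk0) hqn.le,
        mul_nonneg (mul_nonneg hn0 hqR.le) (sub_nonneg.2 htn)]
    calc |(∏ t ∈ range i, (((k : ℝ) - t) / ((q : ℝ) - t))) - ∏ _t ∈ range i, ((k : ℝ) / q)|
        ≤ ∑ t ∈ range i, |((k : ℝ) - t) / ((q : ℝ) - t) - (k : ℝ) / q| := by
          apply prod_abs_sub_le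
          · intro t ht
            have htk : (t : ℝ) ≤ k := by
              exact_mod_cast le_trans (le_of_lt (mem_range.1 ht)) hki
            have htn : (t : ℝ) ≤ n := by
              exact_mod_cast le_trans (Nat.le_of_lt_succ (Nat.lt_succ_of_lt (mem_range.1 ht))) hi
            have hqt : (0 : ℝ) < (q : ℝ) - t := by linarith
            exact div_nonneg (by linarith) (le_of_lt hqt)
          · intro t ht
            have htn : (t : ℝ) ≤ n := by
              exact_mod_cast le_trans (Nat.le_of_lt_succ (Nat.lt_succ_of_lt (mem_range.1 ht))) hi
            have hqt : (0 : ℝ) < (q : ℝ) - t := by linarith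
            rw [div_le_one hqt]; linarith
          · intro t _; positivity
          · intro t _; rw [div_le_one hqR]; exact hkq
      _ ≤ ∑ _t ∈ range i, (n : ℝ) / ((q : ℝ) - n) := sum_le_sum hb
      _ = (i : ℝ) * ((n : ℝ) / ((q : ℝ) - n)) := by rw [sum_const, card_range, nsmul_eq_mul]
      _ ≤ (n : ℝ) * ((n : ℝ) / ((q : ℝ) - n)) := by
          apply mul_le_mul_of_nonneg_right (by exact_mod_cast hi) (by positivity)
      _ = (n : ℝ) ^ 2 / ((q : ℝ) - n) := by ring

lemma inf'_le_inf'_add {α : Type*} (s : Finset α) (hs : s.Nonempty) (f g : α → ℝ) (e : ℝ)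
    (h : ∀ x ∈ s, f x ≤ g x + e) : s.inf' hs f ≤ s.inf' hs g + e := by
  obtain ⟨x, hx, hxe⟩ := s.exists_mem_eq_inf' hs g
  rw [hxe]
  exact le_trans (inf'_le f hx) (h x hx)

set_option maxHeartbeats 1000000 in
theorem stmt_15 (n₁ n₂ : ℕ) (a : ℕ → ℕ → ℝ) :
    Tendsto
      (fun q : ℕ × ℕ =>
        (range (q.1 + 1) ×ˢ range (q.2 + 1)).inf' ⟨(0, 0), by simp⟩ fun kl =>
          ∑ i ∈ range (n₁ + 1), ∑ j ∈ range (n₂ + 1),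
            a i j * ((kl.1.choose i : ℝ) * (kl.2.choose j : ℝ) /
              ((q.1.choose i : ℝ) * (q.2.choose j : ℝ))))
      atTop
      (nhds (sInf {y : ℝ | ∃ x₁ ∈ Set.Icc (0 : ℝ) 1, ∃ x₂ ∈ Set.Icc (0 : ℝ) 1,
        y = ∑ i ∈ range (n₁ + 1), ∑ j ∈ range (n₂ + 1), a i j * x₁ ^ i * x₂ ^ j})) := by
  set g : ℝ × ℝ → ℝ := fun z =>
    ∑ i ∈ range (n₁ + 1), ∑ j ∈ range (n₂ + 1), a i j * z.1 ^ i * z.2 ^ j with hg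
  have hgc : Continuous g := by
    apply continuous_finset_sum; intro i _
    apply continuous_finset_sum; intro j _
    fun_prop
  set K : Set (ℝ × ℝ) := Set.Icc (0 : ℝ) 1 ×ˢ Set.Icc (0 : ℝ) 1 with hK
  have hSeq : {y : ℝ | ∃ x₁ ∈ Set.Icc (0 : ℝ) 1, ∃ x₂ ∈ Set.Icc (0 : ℝ) 1,
      y = ∑ i ∈ range (n₁ + 1), ∑ j ∈ range (n₂ + 1), a i j * x₁ ^ i * x₂ ^ j} = g '' K := by
    ext y
    constructor
    · rintro ⟨x₁, h₁, x₂, h₂, rfl⟩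
      exact ⟨(x₁, x₂), ⟨h₁, h₂⟩, rfl⟩
    · rintro ⟨⟨x₁, x₂⟩, ⟨h₁, h₂⟩, rfl⟩
      exact ⟨x₁, h₁, x₂, h₂, rfl⟩
  rw [hSeq]
  have hKc : IsCompact K := isCompact_Icc.prod isCompact_Icc
  have hne : (g '' K).Nonempty := ⟨g (0, 0), Set.mem_image_of_mem _ (by
    constructor <;> exact ⟨le_refl 0, zero_le_one⟩)⟩
  have hcomp : IsCompact (g '' K) := hKc.image hgc
  have hbdd : BddBelow (g '' K) := hcomp.bddBelow
  set m := sInf (g '' K) with hm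
  obtain ⟨z, hzK, hzm⟩ : m ∈ g '' K := hcomp.sInf_mem hne
  rw [Metric.tendsto_nhds]
  intro ε hε
  obtain ⟨δ, hδ, hδc⟩ := Metric.continuousAt_iff.1 (hgc.continuousAt (x := z)) (ε / 2)
    (half_pos hε)
  set A : ℝ := ∑ i ∈ range (n₁ + 1), ∑ j ∈ range (n₂ + 1), |a i j| with hA
  have hA0 : 0 ≤ A := sum_nonneg fun i _ => sum_nonneg fun j _ => abs_nonneg _
  have hfst : Tendsto (Prod.fst : ℕ × ℕ → ℕ) atTop atTop := by
    rw [← prod_atTop_atTop_eq]; exact tendsto_fst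
  have hsnd : Tendsto (Prod.snd : ℕ × ℕ → ℕ) atTop atTop := by
    rw [← prod_atTop_atTop_eq]; exact tendsto_snd
  have haux : ∀ n : ℕ, Tendsto (fun q : ℕ => (n : ℝ) ^ 2 / ((q : ℝ) - n)) atTop (nhds 0) := by
    intro n
    have h1 : Tendsto (fun q : ℕ => ((q : ℝ) - n)) atTop atTop :=
      tendsto_atTop_add_const_right _ _ tendsto_natCast_atTop_atTop
    have h2 := h1.inv_tendsto_atTop
    have h3 := h2.const_mul ((n : ℝ) ^ 2)
    simpa [div_eq_mul_inv] using h3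
  have hB : Tendsto (fun q : ℕ × ℕ =>
      A * ((n₁ : ℝ) ^ 2 / ((q.1 : ℝ) - n₁) + (n₂ : ℝ) ^ 2 / ((q.2 : ℝ) - n₂)))
      atTop (nhds 0) := by
    have := (((haux n₁).comp hfst).add ((haux n₂).comp hsnd)).const_mul A
    simpa using this
  have hev1 : ∀ᶠ q : ℕ × ℕ in atTop, n₁ < q.1 := hfst.eventually (eventually_gt_atTop n₁)
  have hev2 : ∀ᶠ q : ℕ × ℕ in atTop, n₂ < q.2 := hsnd.eventually (eventually_gt_atTop n₂)
  have hevB : ∀ᶠ q : ℕ × ℕ in atTop,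
      A * ((n₁ : ℝ) ^ 2 / ((q.1 : ℝ) - n₁) + (n₂ : ℝ) ^ 2 / ((q.2 : ℝ) - n₂)) < ε / 2 :=
    hB.eventually_lt_const (half_pos hε)
  have hd1 : ∀ᶠ q : ℕ × ℕ in atTop, (1 : ℝ) / q.1 < δ :=
    (tendsto_one_div_atTop_nhds_zero_nat.comp hfst).eventually_lt_const hδ
  have hd2 : ∀ᶠ q : ℕ × ℕ in atTop, (1 : ℝ) / q.2 < δ :=
    (tendsto_one_div_atTop_nhds_zero_nat.comp hsnd).eventually_lt_const hδ
  filter_upwards [hev1, hev2, hevB, hd1, hd2] with q hq1 hq2 hqB hqd1 hqd2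
  have hq1R : (n₁ : ℝ) < q.1 := by exact_mod_cast hq1
  have hq2R : (n₂ : ℝ) < q.2 := by exact_mod_cast hq2
  have hq1pos : (0 : ℝ) < q.1 := lt_of_le_of_lt (Nat.cast_nonneg n₁) hq1R
  have hq2pos : (0 : ℝ) < q.2 := lt_of_le_of_lt (Nat.cast_nonneg n₂) hq2R
  set B₁ : ℝ := (n₁ : ℝ) ^ 2 / ((q.1 : ℝ) - n₁) with hB₁
  set B₂ : ℝ := (n₂ : ℝ) ^ 2 / ((q.2 : ℝ) - n₂) with hB₂
  have hB₁0 : 0 ≤ B₁ := div_nonneg (by positivity) (by linarith)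
  have hB₂0 : 0 ≤ B₂ := div_nonneg (by positivity) (by linarith)
  set s : Finset (ℕ × ℕ) := range (q.1 + 1) ×ˢ range (q.2 + 1) with hsdef
  set F : ℕ × ℕ → ℝ := fun kl =>
    ∑ i ∈ range (n₁ + 1), ∑ j ∈ range (n₂ + 1),
      a i j * ((kl.1.choose i : ℝ) * (kl.2.choose j : ℝ) /
        ((q.1.choose i : ℝ) * (q.2.choose j : ℝ))) with hF
  set G : ℕ × ℕ → ℝ := fun kl => g ((kl.1 : ℝ) / q.1, (kl.2 : ℝ) / q.2) with hG
  have hs : s.Nonempty := ⟨(0, 0), by simp [hsdef]⟩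
  -- bounds on grid coordinates
  have hmem : ∀ kl ∈ s, kl.1 ≤ q.1 ∧ kl.2 ≤ q.2 := by
    intro kl hkl
    rw [hsdef, mem_product, mem_range, mem_range] at hkl
    omega
  -- step A : |F - G| ≤ A * (B₁ + B₂) on s
  have hFG : ∀ kl ∈ s, |F kl - G kl| ≤ A * (B₁ + B₂) := by
    intro kl hkl
    obtain ⟨hk1, hk2⟩ := hmem kl hkl
    have hk1R : (kl.1 : ℝ) ≤ q.1 := by exact_mod_cast hk1
    have hk2R : (kl.2 : ℝ) ≤ q.2 := by exact_mod_cast hk2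
    have hdiff : F kl - G kl = ∑ i ∈ range (n₁ + 1), ∑ j ∈ range (n₂ + 1),
        a i j * (((kl.1.choose i : ℝ) / (q.1.choose i)) * ((kl.2.choose j : ℝ) / (q.2.choose j))
          - ((kl.1 : ℝ) / q.1) ^ i * ((kl.2 : ℝ) / q.2) ^ j) := by
      rw [hF, hG, hg]
      rw [← sum_sub_distrib]
      refine sum_congr rfl fun i _ => ?_
      rw [← sum_sub_distrib]
      refine sum_congr rfl fun j _ => ?_
      rw [mul_div_mul_comm]
      ring
    have hinner : ∀ i ∈ range (n₁ + 1), ∀ j ∈ range (n₂ + 1),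
        |((kl.1.choose i : ℝ) / (q.1.choose i)) * ((kl.2.choose j : ℝ) / (q.2.choose j))
          - ((kl.1 : ℝ) / q.1) ^ i * ((kl.2 : ℝ) / q.2) ^ j| ≤ B₁ + B₂ := by
      intro i hi j hj
      have hi' : i ≤ n₁ := Nat.lt_succ_iff.1 (mem_range.1 hi)
      have hj' : j ≤ n₂ := Nat.lt_succ_iff.1 (mem_range.1 hj)
      have h1 := ratio_bound n₁ q.1 kl.1 i hq1 hk1 hi'
      have h2 := ratio_bound n₂ q.2 kl.2 j hq2 hk2 hj'
      have hd2pos : (0 : ℝ) < (q.2.choose j : ℝ) := by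
        exact_mod_cast Nat.choose_pos (le_trans hj' (le_of_lt hq2))
      have hr20 : (0 : ℝ) ≤ (kl.2.choose j : ℝ) / (q.2.choose j) := by positivity
      have hr21 : (kl.2.choose j : ℝ) / (q.2.choose j) ≤ 1 := by
        rw [div_le_one hd2pos]
        exact_mod_cast Nat.choose_le_choose j hk2
      have hx0 : (0 : ℝ) ≤ ((kl.1 : ℝ) / q.1) ^ i := by positivity
      have hx1 : ((kl.1 : ℝ) / q.1) ^ i ≤ 1 :=
        pow_le_one₀ (by positivity) (by rw [div_le_one hq1pos]; exact hk1R)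
      set r₁ := (kl.1.choose i : ℝ) / (q.1.choose i)
      set r₂ := (kl.2.choose j : ℝ) / (q.2.choose j)
      set x := ((kl.1 : ℝ) / q.1) ^ i
      set y := ((kl.2 : ℝ) / q.2) ^ j
      calc |r₁ * r₂ - x * y| = |(r₁ - x) * r₂ + x * (r₂ - y)| := by ring_nf
        _ ≤ |(r₁ - x) * r₂| + |x * (r₂ - y)| := abs_add_le _ _
        _ = |r₁ - x| * |r₂| + |x| * |r₂ - y| := by rw [abs_mul, abs_mul]
        _ ≤ B₁ * 1 + 1 * B₂ := by
            apply add_le_add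
            · exact mul_le_mul h1 (abs_le.2 ⟨by linarith, hr21⟩) (abs_nonneg _) hB₁0
            · exact mul_le_mul (abs_le.2 ⟨by linarith, hx1⟩) h2 (abs_nonneg _) zero_le_one
        _ = B₁ + B₂ := by ring
    calc |F kl - G kl|
        = |∑ i ∈ range (n₁ + 1), ∑ j ∈ range (n₂ + 1),
            a i j * (((kl.1.choose i : ℝ) / (q.1.choose i)) * ((kl.2.choose j : ℝ) / (q.2.choose j))
              - ((kl.1 : ℝ) / q.1) ^ i * ((kl.2 : ℝ) / q.2) ^ j)| := by rw [hdiff]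
      _ ≤ ∑ i ∈ range (n₁ + 1), ∑ j ∈ range (n₂ + 1), |a i j| *
            |((kl.1.choose i : ℝ) / (q.1.choose i)) * ((kl.2.choose j : ℝ) / (q.2.choose j))
              - ((kl.1 : ℝ) / q.1) ^ i * ((kl.2 : ℝ) / q.2) ^ j| := by
          refine (abs_sum_le_sum_abs _ _).trans (sum_le_sum fun i _ => ?_)
          refine (abs_sum_le_sum_abs _ _).trans (sum_le_sum fun j _ => ?_)
          rw [abs_mul]
      _ ≤ ∑ i ∈ range (n₁ + 1), ∑ j ∈ range (n₂ + 1), |a i j| * (B₁ + B₂) := by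
          refine sum_le_sum fun i hi => sum_le_sum fun j hj => ?_
          exact mul_le_mul_of_nonneg_left (hinner i hi j hj) (abs_nonneg _)
      _ = A * (B₁ + B₂) := by rw [hA]; simp only [← sum_mul]
  -- step B : grid values are in the image set
  have hGmem : ∀ kl ∈ s, G kl ∈ g '' K := by
    intro kl hkl
    obtain ⟨hk1, hk2⟩ := hmem kl hkl
    refine ⟨((kl.1 : ℝ) / q.1, (kl.2 : ℝ) / q.2), ⟨⟨by positivity, ?_⟩, ⟨by positivity, ?_⟩⟩, rfl⟩
    · rw [div_le_one hq1pos]; exact_mod_cast hk1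
    · rw [div_le_one hq2pos]; exact_mod_cast hk2
  have hmG : m ≤ s.inf' hs G := le_inf' hs G fun kl hkl => csInf_le hbdd (hGmem kl hkl)
  -- step C : a grid point close to the minimizer
  have hGm : s.inf' hs G ≤ m + ε / 2 := by
    obtain ⟨⟨hu0, hu1⟩, ⟨hv0, hv1⟩⟩ := hzK
    set u := z.1
    set v := z.2
    set k₀ := ⌊u * q.1⌋₊ with hk₀
    set l₀ := ⌊v * q.2⌋₊ with hl₀
    have hk₀le : k₀ ≤ q.1 := by
      have h1 : u * q.1 ≤ (q.1 : ℝ) := by nlinarith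
      calc k₀ ≤ ⌊(q.1 : ℝ)⌋₊ := Nat.floor_le_floor h1
        _ = q.1 := Nat.floor_natCast q.1
    have hl₀le : l₀ ≤ q.2 := by
      have h1 : v * q.2 ≤ (q.2 : ℝ) := by nlinarith
      calc l₀ ≤ ⌊(q.2 : ℝ)⌋₊ := Nat.floor_le_floor h1
        _ = q.2 := Nat.floor_natCast q.2
    have hkls : (k₀, l₀) ∈ s := by
      rw [hsdef, mem_product, mem_range, mem_range]; omega
    have hdz : dist (((k₀ : ℝ) / q.1, (l₀ : ℝ) / q.2) : ℝ × ℝ) z < δ := by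
      rw [Prod.dist_eq]
      apply max_lt
      · rw [Real.dist_eq, abs_sub_lt_iff]
        have hfl1 : (k₀ : ℝ) ≤ u * q.1 := Nat.floor_le (by positivity)
        have hfl2 : u * q.1 < (k₀ : ℝ) + 1 := Nat.lt_floor_add_one _
        have hA1 : (k₀ : ℝ) / q.1 ≤ u := by rw [div_le_iff₀ hq1pos]; exact hfl1
        have hA2 : u - (k₀ : ℝ) / q.1 < 1 / q.1 := by
          rw [sub_lt_iff_lt_add, ← add_div, lt_div_iff₀ hq1pos]
          linarith
        constructor <;> linarith
      · rw [Real.dist_eq, abs_sub_lt_iff]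
        have hfl1 : (l₀ : ℝ) ≤ v * q.2 := Nat.floor_le (by positivity)
        have hfl2 : v * q.2 < (l₀ : ℝ) + 1 := Nat.lt_floor_add_one _
        have hA1 : (l₀ : ℝ) / q.2 ≤ v := by rw [div_le_iff₀ hq2pos]; exact hfl1
        have hA2 : v - (l₀ : ℝ) / q.2 < 1 / q.2 := by
          rw [sub_lt_iff_lt_add, ← add_div, lt_div_iff₀ hq2pos]
          linarith
        constructor <;> linarith
    have hgrid := hδc hdz
    rw [Real.dist_eq, abs_sub_lt_iff] at hgrid
    have hGkl : G (k₀, l₀) < m + ε / 2 := by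
      have : g (((k₀ : ℝ) / q.1, (l₀ : ℝ) / q.2) : ℝ × ℝ) < g z + ε / 2 := by linarith [hgrid.1]
      rw [hG]
      simpa [hzm] using this
    exact le_trans (inf'_le G hkls) (le_of_lt hGkl)
  -- step D : combine
  have hle1 : s.inf' hs F ≤ s.inf' hs G + A * (B₁ + B₂) :=
    inf'_le_inf'_add s hs F G _ fun kl hkl => by
      have := (abs_sub_le_iff.1 (hFG kl hkl)).1; linarith
  have hle2 : s.inf' hs G ≤ s.inf' hs F + A * (B₁ + B₂) :=
    inf'_le_inf'_add s hs G F _ fun kl hkl => by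
      have := (abs_sub_le_iff.1 (hFG kl hkl)).2; linarith
  rw [Real.dist_eq, abs_sub_lt_iff]
  constructor <;> linarith
end

section
/- For a bivariate polynomial p with monomial coefficients a_{i,j}, the difference between the Bernstein approximation and p satisfies B_{q₁,q₂}(p; x₁,x₂) − p(x₁,x₂) = Σ_{k=0}^{q₁} Σ_{l=0}^{q₂} (Σ_{i,j} a_{i,j} δ_{k,l}^{q₁,q₂}(i,j)) b_{k,l}^{(q₁,q₂)}(x₁,x₂), where δ_{k,l}^{q₁,q₂}(i,j) = (k/q₁)^i (l/q₂)^j − binomial(k,i) binomial(l,j)/(binomial(q₁,i) binomial(q₂,j)). -/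
open Finset

lemma bern_key (q i : ℕ) (hi : i ≤ q) (x : ℝ) :
    ∑ k ∈ range (q + 1), (k.choose i : ℝ) / (q.choose i : ℝ) *
      ((q.choose k : ℝ) * x ^ k * (1 - x) ^ (q - k)) = x ^ i := by
  have hq : (q.choose i : ℝ) ≠ 0 := Nat.cast_ne_zero.2 (Nat.choose_pos hi).ne'
  have hsub : ∑ k ∈ range (q + 1), (k.choose i : ℝ) / (q.choose i : ℝ) *
      ((q.choose k : ℝ) * x ^ k * (1 - x) ^ (q - k))
      = ∑ k ∈ Ico i (q + 1), (k.choose i : ℝ) / (q.choose i : ℝ) *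
      ((q.choose k : ℝ) * x ^ k * (1 - x) ^ (q - k)) := by
    refine (Finset.sum_subset ?_ ?_).symm
    · intro k hk
      simp only [mem_Ico, mem_range] at *
      omega
    · intro k hk hk'
      simp only [mem_Ico, mem_range] at *
      have : k < i := by omega
      rw [Nat.choose_eq_zero_of_lt this]
      simp
  rw [hsub, Finset.sum_Ico_eq_sum_range]
  have hlen : q + 1 - i = (q - i) + 1 := by omega
  rw [hlen]
  have hterm : ∀ m ∈ range ((q - i) + 1),
      ((i + m).choose i : ℝ) / (q.choose i : ℝ) *
        ((q.choose (i + m) : ℝ) * x ^ (i + m) * (1 - x) ^ (q - (i + m)))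
      = x ^ i * (x ^ m * (1 - x) ^ ((q - i) - m) * ((q - i).choose m : ℝ)) := by
    intro m hm
    simp only [mem_range] at hm
    have him : i ≤ i + m := Nat.le_add_right _ _
    have hkq : i + m ≤ q := by omega
    have hc : (q.choose (i + m) : ℝ) * ((i + m).choose i : ℝ)
        = (q.choose i : ℝ) * ((q - i).choose m : ℝ) := by
      rw [← Nat.cast_mul, ← Nat.cast_mul, Nat.choose_mul him,
        Nat.add_sub_cancel_left]
    have h1 : q - (i + m) = (q - i) - m := by omega
    rw [pow_add, h1, div_mul_eq_mul_div, div_eq_iff hq]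
    linear_combination (x ^ i * x ^ m * (1 - x) ^ (q - i - m)) * hc
  rw [Finset.sum_congr rfl hterm, ← Finset.mul_sum]
  have : ∑ m ∈ range ((q - i) + 1),
      x ^ m * (1 - x) ^ ((q - i) - m) * ((q - i).choose m : ℝ) = 1 := by
    have h := add_pow x (1 - x) (q - i)
    simp at h
    rw [← h]
  rw [this, mul_one]

lemma bern_oneD (n q : ℕ) (hq : n ≤ q) (c : ℕ → ℝ) (x : ℝ) :
    ∑ k ∈ range (q + 1), (∑ i ∈ range (n + 1), c i * ((k.choose i : ℝ) / (q.choose i : ℝ))) *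
      ((q.choose k : ℝ) * x ^ k * (1 - x) ^ (q - k)) = ∑ i ∈ range (n + 1), c i * x ^ i := by
  simp only [Finset.sum_mul]
  rw [Finset.sum_comm]
  refine Finset.sum_congr rfl fun i hi => ?_
  simp only [mem_range, Nat.lt_succ_iff] at hi
  rw [← bern_key q i (hi.trans hq) x, Finset.mul_sum]
  exact Finset.sum_congr rfl fun k _ => by ring

lemma bern_repr (n₁ n₂ q₁ q₂ : ℕ) (hq₁ : n₁ ≤ q₁) (hq₂ : n₂ ≤ q₂) (a : ℕ → ℕ → ℝ)
    (x₁ x₂ : ℝ) :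
    ∑ k ∈ range (q₁ + 1), ∑ l ∈ range (q₂ + 1),
      (∑ i ∈ range (n₁ + 1), ∑ j ∈ range (n₂ + 1),
        a i j * ((k.choose i : ℝ) * (l.choose j : ℝ) /
            ((q₁.choose i : ℝ) * (q₂.choose j : ℝ)))) *
        ((q₁.choose k : ℝ) * x₁ ^ k * (1 - x₁) ^ (q₁ - k) *
          ((q₂.choose l : ℝ) * x₂ ^ l * (1 - x₂) ^ (q₂ - l)))
    = ∑ i ∈ range (n₁ + 1), ∑ j ∈ range (n₂ + 1), a i j * x₁ ^ i * x₂ ^ j := by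
  have step1 : ∀ k ∈ range (q₁ + 1),
      ∑ l ∈ range (q₂ + 1),
        (∑ i ∈ range (n₁ + 1), ∑ j ∈ range (n₂ + 1),
          a i j * ((k.choose i : ℝ) * (l.choose j : ℝ) /
              ((q₁.choose i : ℝ) * (q₂.choose j : ℝ)))) *
        ((q₁.choose k : ℝ) * x₁ ^ k * (1 - x₁) ^ (q₁ - k) *
          ((q₂.choose l : ℝ) * x₂ ^ l * (1 - x₂) ^ (q₂ - l)))
      = ((q₁.choose k : ℝ) * x₁ ^ k * (1 - x₁) ^ (q₁ - k)) *
        ∑ l ∈ range (q₂ + 1),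
          (∑ j ∈ range (n₂ + 1),
            (∑ i ∈ range (n₁ + 1), a i j * ((k.choose i : ℝ) / (q₁.choose i : ℝ))) *
              ((l.choose j : ℝ) / (q₂.choose j : ℝ))) *
          ((q₂.choose l : ℝ) * x₂ ^ l * (1 - x₂) ^ (q₂ - l)) := by
    intro k _
    rw [Finset.mul_sum]
    refine Finset.sum_congr rfl fun l _ => ?_
    simp only [Finset.sum_mul, Finset.mul_sum]
    rw [Finset.sum_comm]
    refine Finset.sum_congr rfl fun i _ => Finset.sum_congr rfl fun j _ => by ring
  rw [Finset.sum_congr rfl step1]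
  have step2 : ∀ k ∈ range (q₁ + 1),
      ((q₁.choose k : ℝ) * x₁ ^ k * (1 - x₁) ^ (q₁ - k)) *
        ∑ l ∈ range (q₂ + 1),
          (∑ j ∈ range (n₂ + 1),
            (∑ i ∈ range (n₁ + 1), a i j * ((k.choose i : ℝ) / (q₁.choose i : ℝ))) *
              ((l.choose j : ℝ) / (q₂.choose j : ℝ))) *
          ((q₂.choose l : ℝ) * x₂ ^ l * (1 - x₂) ^ (q₂ - l))
      = (∑ i ∈ range (n₁ + 1),
          (∑ j ∈ range (n₂ + 1), a i j * x₂ ^ j) * ((k.choose i : ℝ) / (q₁.choose i : ℝ))) *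
        ((q₁.choose k : ℝ) * x₁ ^ k * (1 - x₁) ^ (q₁ - k)) := by
    intro k _
    rw [bern_oneD n₂ q₂ hq₂ _ x₂]
    simp only [Finset.mul_sum, Finset.sum_mul]
    rw [Finset.sum_comm]
    refine Finset.sum_congr rfl fun i _ => Finset.sum_congr rfl fun j _ => by ring
  rw [Finset.sum_congr rfl step2, bern_oneD n₁ q₁ hq₁ _ x₁]
  refine Finset.sum_congr rfl fun i _ => ?_
  rw [Finset.sum_mul]
  exact Finset.sum_congr rfl fun j _ => by ring

theorem stmt_16 (n₁ n₂ q₁ q₂ : ℕ) (hq₁ : n₁ ≤ q₁) (hq₂ : n₂ ≤ q₂) (a : ℕ → ℕ → ℝ)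
    (p : ℝ → ℝ → ℝ)
    (hp : ∀ x₁ x₂ : ℝ, p x₁ x₂ =
      ∑ i ∈ range (n₁ + 1), ∑ j ∈ range (n₂ + 1), a i j * x₁ ^ i * x₂ ^ j)
    (x₁ x₂ : ℝ) :
    (∑ k ∈ range (q₁ + 1), ∑ l ∈ range (q₂ + 1),
        p ((k : ℝ) / q₁) ((l : ℝ) / q₂) *
          ((q₁.choose k : ℝ) * x₁ ^ k * (1 - x₁) ^ (q₁ - k) *
            ((q₂.choose l : ℝ) * x₂ ^ l * (1 - x₂) ^ (q₂ - l)))) - p x₁ x₂ =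
      ∑ k ∈ range (q₁ + 1), ∑ l ∈ range (q₂ + 1),
        (∑ i ∈ range (n₁ + 1), ∑ j ∈ range (n₂ + 1),
          a i j * (((k : ℝ) / q₁) ^ i * ((l : ℝ) / q₂) ^ j -
            (k.choose i : ℝ) * (l.choose j : ℝ) /
              ((q₁.choose i : ℝ) * (q₂.choose j : ℝ)))) *
          ((q₁.choose k : ℝ) * x₁ ^ k * (1 - x₁) ^ (q₁ - k) *
            ((q₂.choose l : ℝ) * x₂ ^ l * (1 - x₂) ^ (q₂ - l))) := by
  simp only [hp]
  rw [← bern_repr n₁ n₂ q₁ q₂ hq₁ hq₂ a x₁ x₂, ← Finset.sum_sub_distrib]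
  refine Finset.sum_congr rfl fun k _ => ?_
  rw [← Finset.sum_sub_distrib]
  refine Finset.sum_congr rfl fun l _ => ?_
  rw [← sub_mul]
  congr 1
  rw [← Finset.sum_sub_distrib]
  refine Finset.sum_congr rfl fun i _ => ?_
  rw [← Finset.sum_sub_distrib]
  exact Finset.sum_congr rfl fun j _ => by ring
end

section
/- For 0 ≤ i ≤ n₁, 0 ≤ j ≤ n₂, q₁ ≥ n₁, q₂ ≥ n₂, and all 0 ≤ k ≤ q₁, 0 ≤ l ≤ q₂: 0 ≤ (k/q₁)^i (l/q₂)^j − binomial(k,i) binomial(l,j)/(binomial(q₁,i) binomial(q₂,j)) ≤ ((q₁−1)/q₁²)·i(i−1)/2 + ((q₂−1)/q₂²)·j(j−1)/2. -/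
lemma cast_key (q i k : ℕ) (h1 : 1 ≤ q) (hik : i + 1 ≤ k) (hk : k ≤ q) :
    (k:ℝ) * ((q:ℝ) - k) ≤ ((q:ℝ) - 1) * ((q:ℝ) - i) := by
  have key : k * (q - k) ≤ (q - 1) * (q - i) := by
    rcases Nat.eq_or_lt_of_le hk with rfl | hlt
    · simp
    · exact Nat.mul_le_mul (by omega) (by omega)
  have key' : ((k * (q - k) : ℕ) : ℝ) ≤ (((q - 1) * (q - i) : ℕ) : ℝ) := Nat.cast_le.2 key
  rw [Nat.cast_mul, Nat.cast_mul, Nat.cast_sub hk, Nat.cast_sub (by omega : i ≤ q),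
    Nat.cast_sub h1, Nat.cast_one] at key'
  exact key'

set_option maxHeartbeats 1000000 in
lemma onevar (q i k : ℕ) (hi : i ≤ q) (hk : k ≤ q) :
    (k.choose i : ℝ) / (q.choose i : ℝ) ≤ ((k : ℝ) / q) ^ i ∧
    ((k : ℝ) / q) ^ i - (k.choose i : ℝ) / (q.choose i : ℝ) ≤
      ((q : ℝ) - 1) / (q : ℝ) ^ 2 * ((i : ℝ) * ((i : ℝ) - 1) / 2) := by
  induction i with
  | zero => norm_num
  | succ i IH =>
    have hq1 : 1 ≤ q := by omega
    have hiq : i ≤ q := by omega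
    have qpos : (0:ℝ) < q := by exact_mod_cast hq1
    have hq1R : (1:ℝ) ≤ q := by exact_mod_cast hq1
    obtain ⟨h1, h2⟩ := IH hiq
    have ha0 : (0:ℝ) ≤ (k:ℝ)/q := by positivity
    have ha1 : (k:ℝ)/q ≤ 1 := by
      rw [div_le_one qpos]; exact_mod_cast hk
    have hcq : (0:ℝ) < q.choose i := by exact_mod_cast Nat.choose_pos hiq
    have hcq' : (0:ℝ) < q.choose (i+1) := by
      exact_mod_cast Nat.choose_pos (by omega : i+1 ≤ q)
    have hR0 : (0:ℝ) ≤ (k.choose i : ℝ)/(q.choose i) := by positivity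
    have hiR : (0:ℝ) ≤ (i:ℝ) := by positivity
    have hE0 : (0:ℝ) ≤ ((q:ℝ) - 1) / (q:ℝ)^2 * ((i:ℝ) * ((i:ℝ) - 1) / 2) := by
      rcases Nat.eq_zero_or_pos i with h | h
      · simp [h]
      · have h1i : (1:ℝ) ≤ i := by exact_mod_cast h
        have hnn : (0:ℝ) ≤ (i:ℝ) * ((i:ℝ) - 1) := by nlinarith
        exact mul_nonneg (div_nonneg (by linarith) (by positivity)) (by linarith)
    have hE0' : (0:ℝ) ≤ ((q:ℝ) - 1) / (q:ℝ)^2 * i :=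
      mul_nonneg (div_nonneg (by linarith) (by positivity)) hiR
    have hEstep : ((q:ℝ) - 1) / (q:ℝ)^2 * (((i:ℕ)+1:ℝ) * (((i:ℕ)+1:ℝ) - 1) / 2)
        = ((q:ℝ) - 1) / (q:ℝ)^2 * ((i:ℝ) * ((i:ℝ) - 1) / 2)
          + ((q:ℝ) - 1) / (q:ℝ)^2 * i := by ring
    push_cast
    rw [hEstep]
    rcases Nat.lt_or_ge k (i+1) with hk' | hk'
    · -- k ≤ i : choose = 0
      have hch0 : k.choose (i+1) = 0 := Nat.choose_eq_zero_of_lt hk'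
      rw [hch0]
      push_cast
      rw [zero_div]
      constructor
      · positivity
      · rw [sub_zero]
        rcases Nat.eq_zero_or_pos k with rfl | hkpos
        · simp only [Nat.cast_zero, zero_div]
          rw [zero_pow (by omega : i + 1 ≠ 0)]
          linarith
        · have hi1 : 1 ≤ i := by omega
          have hi1R : (1:ℝ) ≤ i := by exact_mod_cast hi1
          have step1 : ((k:ℝ)/q)^(i+1) ≤ ((k:ℝ)/q)^2 :=
            pow_le_pow_of_le_one ha0 ha1 (by omega)
          have step2 : ((k:ℝ)/q)^2 ≤ ((q:ℝ)-1) * i / (q:ℝ)^2 := by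
            rw [div_pow, div_le_div_iff₀ (by positivity) (by positivity)]
            have hkq : (k:ℝ) ≤ (q:ℝ) - 1 := by
              have h' : k + 1 ≤ q := by omega
              have h'' := (Nat.cast_le (α := ℝ)).2 h'
              push_cast at h''; linarith
            have hki : (k:ℝ) ≤ (i:ℝ) := by exact_mod_cast (by omega : k ≤ i)
            have hk0 : (0:ℝ) ≤ k := by positivity
            have f : (k:ℝ) * k ≤ ((q:ℝ)-1) * i := mul_le_mul hkq hki hk0 (by linarith)
            nlinarith [mul_le_mul_of_nonneg_right f (sq_nonneg (q:ℝ))]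
          have step3 : ((q:ℝ)-1) * i / (q:ℝ)^2 = ((q:ℝ)-1)/(q:ℝ)^2 * i := by ring
          linarith [step1, step2]
    · -- i + 1 ≤ k
      have hqi : (0:ℝ) < (q:ℝ) - i := by
        have h' : i + 1 ≤ q := by omega
        have h'' := (Nat.cast_le (α := ℝ)).2 h'
        push_cast at h''; linarith
      have hik : i ≤ k := by omega
      have ekey : ∀ m : ℕ, i ≤ m →
          (m.choose (i+1) : ℝ) = (m.choose i : ℝ) * ((m:ℝ) - i) / ((i:ℝ)+1) := by
        intro m hm
        have h0 := Nat.choose_succ_right_eq m i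
        have hcast : (m.choose (i+1) : ℝ) * ((i:ℝ)+1) = (m.choose i : ℝ) * ((m:ℝ) - i) := by
          have h3 := congrArg (Nat.cast (R := ℝ)) h0
          push_cast [Nat.cast_sub hm] at h3
          linarith [h3]
        field_simp
        linarith [hcast]
      have eK := ekey k hik
      have eQ := ekey q (by omega)
      have hRid : (k.choose (i+1) : ℝ) / (q.choose (i+1) : ℝ)
          = (k.choose i : ℝ)/(q.choose i) * (((k:ℝ) - i)/((q:ℝ) - i)) := by
        rw [eK, eQ]
        have hchq : ((q.choose i : ℝ)) ≠ 0 := ne_of_gt hcq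
        have hi1 : ((i:ℝ)+1) ≠ 0 := by positivity
        field_simp
      rw [hRid]
      have hab : ((k:ℝ) - i)/((q:ℝ) - i) ≤ (k:ℝ)/q := by
        rw [div_le_div_iff₀ hqi qpos]
        have hkq : (k:ℝ) ≤ q := by exact_mod_cast hk
        have hmul : (i:ℝ) * k ≤ (i:ℝ) * q := mul_le_mul_of_nonneg_left hkq hiR
        ring_nf
        nlinarith [hmul]
      have hb0 : (0:ℝ) ≤ ((k:ℝ) - i)/((q:ℝ) - i) := by
        have hik' : (i:ℝ) ≤ k := by exact_mod_cast hik
        apply div_nonneg <;> linarith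
      have hident : ((k:ℝ)/q)^(i+1) - (k.choose i : ℝ)/(q.choose i) * (((k:ℝ) - i)/((q:ℝ) - i))
          = ((k:ℝ)/q) * (((k:ℝ)/q)^i - (k.choose i : ℝ)/(q.choose i))
            + (k.choose i : ℝ)/(q.choose i) * ((k:ℝ)/q - ((k:ℝ) - i)/((q:ℝ) - i)) := by
        rw [pow_succ]; ring
      have ht1 : ((k:ℝ)/q) * (((k:ℝ)/q)^i - (k.choose i : ℝ)/(q.choose i))
          ≤ ((q:ℝ) - 1) / (q:ℝ)^2 * ((i:ℝ) * ((i:ℝ) - 1) / 2) := by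
        nlinarith [mul_nonneg (sub_nonneg.2 ha1) (sub_nonneg.2 h1)]
      have ht2 : (k.choose i : ℝ)/(q.choose i) * ((k:ℝ)/q - ((k:ℝ) - i)/((q:ℝ) - i))
          ≤ ((q:ℝ) - 1)/(q:ℝ)^2 * i := by
        rcases Nat.eq_zero_or_pos i with rfl | hipos
        · norm_num
        · have hi1R : (1:ℝ) ≤ i := by exact_mod_cast hipos
          have hRa : (k.choose i : ℝ)/(q.choose i) ≤ (k:ℝ)/q := by
            calc (k.choose i : ℝ)/(q.choose i) ≤ ((k:ℝ)/q)^i := h1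
              _ ≤ ((k:ℝ)/q)^1 := pow_le_pow_of_le_one ha0 ha1 hipos
              _ = (k:ℝ)/q := pow_one _
          have step : (k.choose i : ℝ)/(q.choose i) * ((k:ℝ)/q - ((k:ℝ) - i)/((q:ℝ) - i))
              ≤ ((k:ℝ)/q) * ((k:ℝ)/q - ((k:ℝ) - i)/((q:ℝ) - i)) :=
            mul_le_mul_of_nonneg_right hRa (sub_nonneg.2 hab)
          have hexp : (k:ℝ)/q - ((k:ℝ) - i)/((q:ℝ) - i)
              = (i:ℝ)*((q:ℝ) - k) / ((q:ℝ)*((q:ℝ) - i)) := by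
            field_simp
            ring
          have step2 : ((k:ℝ)/q) * ((i:ℝ)*((q:ℝ) - k) / ((q:ℝ)*((q:ℝ) - i)))
              ≤ ((q:ℝ) - 1)/(q:ℝ)^2 * i := by
            rw [div_mul_div_comm, show ((q:ℝ) - 1)/(q:ℝ)^2 * i = (((q:ℝ) - 1) * i)/(q:ℝ)^2 by ring,
              div_le_div_iff₀ (by positivity) (by positivity)]
            have ck := cast_key q i k hq1 hk' hk
            nlinarith [mul_le_mul_of_nonneg_left ck (show (0:ℝ) ≤ (i:ℝ)*(q:ℝ)^2 by positivity)]
          calc (k.choose i : ℝ)/(q.choose i) * ((k:ℝ)/q - ((k:ℝ) - i)/((q:ℝ) - i))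
              ≤ ((k:ℝ)/q) * ((k:ℝ)/q - ((k:ℝ) - i)/((q:ℝ) - i)) := step
            _ = ((k:ℝ)/q) * ((i:ℝ)*((q:ℝ) - k) / ((q:ℝ)*((q:ℝ) - i))) := by rw [hexp]
            _ ≤ ((q:ℝ) - 1)/(q:ℝ)^2 * i := step2
      constructor
      · nlinarith [mul_nonneg ha0 (sub_nonneg.2 h1), mul_nonneg hR0 (sub_nonneg.2 hab)]
      · linarith [hident, ht1, ht2]

open Finset

theorem stmt_18 (n₁ n₂ q₁ q₂ i j k l : ℕ)
    (hi : i ≤ n₁) (hj : j ≤ n₂) (hq₁ : n₁ ≤ q₁) (hq₂ : n₂ ≤ q₂)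
    (hk : k ≤ q₁) (hl : l ≤ q₂) :
    0 ≤ ((k : ℝ) / q₁) ^ i * ((l : ℝ) / q₂) ^ j -
        (k.choose i : ℝ) * (l.choose j : ℝ) / ((q₁.choose i : ℝ) * (q₂.choose j : ℝ)) ∧
      ((k : ℝ) / q₁) ^ i * ((l : ℝ) / q₂) ^ j -
          (k.choose i : ℝ) * (l.choose j : ℝ) / ((q₁.choose i : ℝ) * (q₂.choose j : ℝ)) ≤
        (((q₁ : ℝ) - 1) / (q₁ : ℝ) ^ 2) * ((i : ℝ) * ((i : ℝ) - 1) / 2) +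
          (((q₂ : ℝ) - 1) / (q₂ : ℝ) ^ 2) * ((j : ℝ) * ((j : ℝ) - 1) / 2) := by
  have hiq : i ≤ q₁ := hi.trans hq₁
  have hjq : j ≤ q₂ := hj.trans hq₂
  obtain ⟨H1a, H1b⟩ := onevar q₁ i k hiq hk
  obtain ⟨H2a, H2b⟩ := onevar q₂ j l hjq hl
  have hsplit : (k.choose i : ℝ) * (l.choose j : ℝ) / ((q₁.choose i : ℝ) * (q₂.choose j : ℝ))
      = (k.choose i : ℝ) / (q₁.choose i : ℝ) * ((l.choose j : ℝ) / (q₂.choose j : ℝ)) :=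
    (div_mul_div_comm _ _ _ _).symm
  rw [hsplit]
  have hA0 : (0:ℝ) ≤ (k.choose i : ℝ) / (q₁.choose i : ℝ) := by positivity
  have hB0 : (0:ℝ) ≤ (l.choose j : ℝ) / (q₂.choose j : ℝ) := by positivity
  have ha0 : (0:ℝ) ≤ (k:ℝ)/q₁ := by positivity
  have hb0 : (0:ℝ) ≤ (l:ℝ)/q₂ := by positivity
  have hd1 : (k:ℝ)/q₁ ≤ 1 := by
    rcases Nat.eq_zero_or_pos q₁ with h | h
    · have : k = 0 := by omega
      simp [this]
    · rw [div_le_one (by exact_mod_cast h)]; exact_mod_cast hk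
  have hd2 : (l:ℝ)/q₂ ≤ 1 := by
    rcases Nat.eq_zero_or_pos q₂ with h | h
    · have : l = 0 := by omega
      simp [this]
    · rw [div_le_one (by exact_mod_cast h)]; exact_mod_cast hl
  have ha1 : ((k:ℝ)/q₁)^i ≤ 1 := pow_le_one₀ ha0 hd1
  have hb1 : ((l:ℝ)/q₂)^j ≤ 1 := pow_le_one₀ hb0 hd2
  have hap0 : (0:ℝ) ≤ ((k:ℝ)/q₁)^i := by positivity
  have hbp0 : (0:ℝ) ≤ ((l:ℝ)/q₂)^j := by positivity
  constructor
  · have := mul_le_mul H1a H2a hB0 hap0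
    linarith
  · have t1 : (((k:ℝ)/q₁)^i - (k.choose i : ℝ)/(q₁.choose i)) * (((l:ℝ)/q₂)^j)
        ≤ ((q₁:ℝ) - 1)/(q₁:ℝ)^2 * ((i:ℝ)*((i:ℝ)-1)/2) := by
      calc (((k:ℝ)/q₁)^i - (k.choose i : ℝ)/(q₁.choose i)) * (((l:ℝ)/q₂)^j)
          ≤ (((k:ℝ)/q₁)^i - (k.choose i : ℝ)/(q₁.choose i)) * 1 :=
            mul_le_mul_of_nonneg_left hb1 (by linarith)
        _ = ((k:ℝ)/q₁)^i - (k.choose i : ℝ)/(q₁.choose i) := mul_one _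
        _ ≤ _ := H1b
    have t2 : (k.choose i : ℝ)/(q₁.choose i) * (((l:ℝ)/q₂)^j - (l.choose j : ℝ)/(q₂.choose j))
        ≤ ((q₂:ℝ) - 1)/(q₂:ℝ)^2 * ((j:ℝ)*((j:ℝ)-1)/2) := by
      have hA1 : (k.choose i : ℝ)/(q₁.choose i) ≤ 1 := le_trans H1a ha1
      calc (k.choose i : ℝ)/(q₁.choose i) * (((l:ℝ)/q₂)^j - (l.choose j : ℝ)/(q₂.choose j))
          ≤ 1 * (((l:ℝ)/q₂)^j - (l.choose j : ℝ)/(q₂.choose j)) :=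
            mul_le_mul_of_nonneg_right hA1 (by linarith)
        _ = ((l:ℝ)/q₂)^j - (l.choose j : ℝ)/(q₂.choose j) := one_mul _
        _ ≤ _ := H2b
    nlinarith [t1, t2]
end
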